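/- arXiv:1708.09061 — 8 statements merged into one kernel-verified Lean document; each statement's English description precedes it below -/
import Mathlib

section
/- Let γ < κ be infinite cardinals. Let c : [κ]^κ → γ be continuous, where [κ]^κ is given the topology Σ([κ]^{<γ}, [κ]^{<γ}) and γ is given the discrete topology (equivalently: for every X ∈ [κ]^κ there exist disjoint A, B ∈ [κ]^{<γ} with A ⊆ X, B ∩ X = ∅, and c constant on [A;B]). Then there is a set H ∈ [κ]^κ with |κ − H| ≤ γ such that c is constant on [H]^κ. Moreover, if γ is a regular cardinal, then H can be chosen so that |κ − H| < γ. -/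
open Set Cardinal

universe u

/-- `[κ]^κ`: the subsets of `κ` (viewed as the set of ordinals `< κ`) of cardinality `κ`
(equivalently, of order type `κ`). -/
def bigSets (κ : Cardinal.{0}) : Set (Set Ordinal.{0}) :=
  {X | X ⊆ Set.Iio κ.ord ∧ #X = Cardinal.lift.{1} κ}

/-- `[H]^κ`: the subsets of `H` of cardinality `κ`. -/
def subBig (κ : Cardinal.{0}) (H : Set Ordinal.{0}) : Set (Set Ordinal.{0}) :=
  {X | X ⊆ H ∧ #X = Cardinal.lift.{1} κ}

/-- `X` matches the pattern `(A,B)`: `A ⊆ X` and `B ∩ X = ∅`. -/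
def Matches (X A B : Set Ordinal.{0}) : Prop :=
  A ⊆ X ∧ B ∩ X = ∅

/-- `[A;B]`: the members of `[κ]^κ` matching the pattern `(A,B)`. -/
def patternSet (κ : Cardinal.{0}) (A B : Set Ordinal.{0}) : Set (Set Ordinal.{0}) :=
  {X ∈ bigSets κ | Matches X A B}

/-- `Σ(𝒜,ℬ)`: the subsets of `[κ]^κ` which are unions of sets `[A;B]` with
`A ∈ 𝒜`, `B ∈ ℬ`, `A ∩ B = ∅`. -/
def SigmaFam (κ : Cardinal.{0}) (𝒜 ℬ : Set (Set Ordinal.{0})) : Set (Set (Set Ordinal.{0})) :=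
  {S | ∃ Q : Set (Set Ordinal.{0} × Set Ordinal.{0}),
    (∀ p ∈ Q, p.1 ∈ 𝒜 ∧ p.2 ∈ ℬ ∧ Disjoint p.1 p.2) ∧
    S = {X ∈ bigSets κ | ∃ p ∈ Q, Matches X p.1 p.2}}

/-- `Δ(𝒜,ℬ)`: those `S` with both `S` and `[κ]^κ \ S` in `Σ(𝒜,ℬ)`. -/
def DeltaFam (κ : Cardinal.{0}) (𝒜 ℬ : Set (Set Ordinal.{0})) : Set (Set (Set Ordinal.{0})) :=
  {S | S ∈ SigmaFam κ 𝒜 ℬ ∧ bigSets κ \ S ∈ SigmaFam κ 𝒜 ℬ}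

/-- `[κ]^{<γ}`: subsets of `κ` of cardinality `< γ`. -/
def smallSets (κ γ : Cardinal.{0}) : Set (Set Ordinal.{0}) :=
  {A | A ⊆ Set.Iio κ.ord ∧ #A < Cardinal.lift.{1} γ}

/-- `[κ]^n`: `n`-element subsets of `κ`. -/
def nSets (κ : Cardinal.{0}) (n : ℕ) : Set (Set Ordinal.{0}) :=
  {A | A ⊆ Set.Iio κ.ord ∧ #A = n}

/-- `[κ]^{<ω}`: finite subsets of `κ`. -/
def finSets (κ : Cardinal.{0}) : Set (Set Ordinal.{0}) :=
  {A | A ⊆ Set.Iio κ.ord ∧ A.Finite}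

/-- `[κ]^ω`: subsets of `κ` of order type `ω`. -/
def omegaSets (κ : Cardinal.{0}) : Set (Set Ordinal.{0}) :=
  {A | A ⊆ Set.Iio κ.ord ∧ A.Infinite ∧ ∀ a ∈ A, (A ∩ Set.Iio a).Finite}

/-- `S ⊆ [κ]^κ` is Ramsey: some `H ∈ [κ]^κ` is homogeneous for `S`. -/
def IsRamsey (κ : Cardinal.{0}) (S : Set (Set Ordinal.{0})) : Prop :=
  ∃ H ∈ bigSets κ, subBig κ H ⊆ S ∨ subBig κ H ∩ S = ∅

/-! For every `X ∈ [κ]^κ` choose a pattern `(A_X, B_X)` in `[κ]^{<γ}` on which `c` is constant.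
Two such patterns that do not contradict each other (`A_X ∩ B_Y = A_Y ∩ B_X = ∅`) give the same
colour, since both pattern sets contain `κ \ (B_X ∪ B_Y)`.

Iterate `E ↦ A_{W E} ∪ B_{W E}` along the ordinals `j ≤ γ`, taking unions, where `W E` avoids `E`.
The sets `A_{W E_j}` are pairwise disjoint, so each set of size `< γ` misses one of them. With
`W E = κ \ E`, any two sets avoiding `D = E_γ` are compatible with a common `W E_j`, so `c` is
constant off `D`, and `|D| ≤ γ`. For regular `γ`, suppose that `c` takes a value other than this
constant on `[κ \ E]^κ` for every `|E| < γ`, and let `W E` be such a set. Then every `E_j` with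
`j < γ` has size `< γ`, and the complement of `D ∪ ⋃_{j<γ} B_{W E_j}` is compatible with some
`W E_j`: a contradiction. -/

universe v w

section Chain

variable {β : Type v} (f : Set β → Set β)

noncomputable def cumulativeChain : Ordinal.{u} → Set β :=
  Ordinal.lt_wf.fix fun j rec => ⋃ (i) (h : i < j), f (rec i h)

theorem cumulativeChain_eq (j : Ordinal.{u}) :
    cumulativeChain f j = ⋃ i < j, f (cumulativeChain f i) :=
  Ordinal.lt_wf.fix_eq _ j

theorem subset_cumulativeChain {i j : Ordinal.{u}} (h : i < j) :
    f (cumulativeChain f i) ⊆ cumulativeChain f j := by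
  rw [cumulativeChain_eq f j]
  exact subset_biUnion_of_mem (u := fun i => f (cumulativeChain f i)) h

theorem mk_cumulativeChain_le {c : Cardinal.{v}} (hc : ℵ₀ ≤ c)
    (hf : ∀ E : Set β, #E ≤ c → #(f E) ≤ c) (j : Ordinal.{u})
    (hj : lift.{v} j.card ≤ lift.{u} c) : #(cumulativeChain f j) ≤ c := by
  induction j using WellFoundedLT.induction with
  | _ j ih =>
    rw [cumulativeChain_eq]
    exact mk_biUnion_le_of_le_lift hj hc _ fun i hi =>
      hf _ (ih i hi ((lift_le.2 (Ordinal.card_le_card hi.le)).trans hj))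

theorem mk_cumulativeChain_lt {c : Cardinal.{v}} (hc : c.IsRegular)
    (hf : ∀ E : Set β, #E < c → #(f E) < c) (j : Ordinal.{u})
    (hj : lift.{v} j.card < lift.{u} c) : #(cumulativeChain f j) < c := by
  induction j using WellFoundedLT.induction with
  | _ j ih =>
    rw [(cumulativeChain_eq f j).trans (biUnion_eq_iUnion (Iio j) _), ← lift_lt.{v, u + 1}]
    have hι : lift.{v} #(Iio j) < lift.{u + 1} c := by
      simpa [mk_Iio_ordinal, lift_lift, lift_umax.{u, u + 1}] using lift_lt.{max u v, u + 1}.2 hj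
    refine (mk_iUnion_le_lift _).trans_lt (mul_lt_of_lt hc.lift.aleph0_le hι
      (lift_iSup_lt_of_lt_cof_ord ?_ fun i => lift_lt.2 (hf _ (ih i i.2 ?_))))
    · rw [lift_lift, hc.lift.cof_ord]
      simpa [lift_lift, lift_umax] using lift_lt.{max (u + 1) v, max (u + 1) v}.2 hι
    · exact (lift_le.2 (Ordinal.card_le_card i.2.le)).trans_lt hj

theorem pairwiseDisjoint_cumulativeChain {g : Set β → Set β} (hgf : ∀ E, g E ⊆ f E)
    {o : Ordinal.{u}} (hg : ∀ j < o, Disjoint (g (cumulativeChain f j)) (cumulativeChain f j)) :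
    (Iio o).PairwiseDisjoint (g ∘ cumulativeChain f) := by
  have hlt : ∀ i j, i < j → j < o →
      Disjoint (g (cumulativeChain f i)) (g (cumulativeChain f j)) := fun i j hij hj =>
    (hg j hj).symm.mono_left ((hgf _).trans (subset_cumulativeChain f hij))
  intro i hi j hj hne
  rcases hne.lt_or_gt with hij | hji
  · exact hlt i j hij hj
  · exact (hlt j i hji hi).symm

end Chain

theorem exists_disjoint_of_pairwiseDisjoint {α : Type v} {ι : Type w} {s : Set ι}
    {P : ι → Set α} (hP : s.PairwiseDisjoint P) {B : Set α} (hB : lift.{w} #B < lift.{v} #s) :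
    ∃ i ∈ s, Disjoint B (P i) := by
  by_contra! h
  choose x hxB hxP using fun i : s => not_disjoint_iff.1 (h i i.2)
  have hinj : Function.Injective fun i : s => (⟨x i, hxB i⟩ : B) := by
    intro i j hij
    have hxij : x i = x j := congrArg Subtype.val hij
    exact Subtype.ext (hP.elim i.2 j.2 (not_disjoint_iff.2 ⟨x i, hxP i, hxij ▸ hxP j⟩))
  exact (lift_mk_le_lift_mk_of_injective hinj).not_gt hB

theorem Cardinal.mk_union_lt {α : Type v} {a : Cardinal.{v}} (ha : ℵ₀ ≤ a) {s t : Set α}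
    (hs : #s < a) (ht : #t < a) : #(s ∪ t : Set α) < a :=
  (mk_union_le s t).trans_lt (add_lt_of_lt ha hs ht)

section Patterns

variable {κ γ : Cardinal.{0}}

theorem diff_mem_bigSets (hκ : ℵ₀ ≤ κ) {s : Set Ordinal.{0}} (hs : #s < lift.{1} κ) :
    Iio κ.ord \ s ∈ bigSets κ := by
  have hs' : #(Iio κ.ord ∩ s : Set Ordinal.{0}) < lift.{1} κ :=
    (mk_le_mk_of_subset inter_subset_right).trans_lt hs
  refine ⟨sdiff_subset, eq_of_add_eq_of_aleph0_le ?_ hs' (aleph0_le_lift.2 hκ)⟩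
  rw [← sdiff_self_inter, add_comm, mk_sdiff_add_mk inter_subset_left, mk_Iio_ordinal, card_ord]

theorem patternSet_anti {A B A' B' : Set Ordinal.{0}} (hA : A ⊆ A') (hB : B ⊆ B') :
    patternSet κ A' B' ⊆ patternSet κ A B := fun _ ⟨hX, hA'X, hB'X⟩ =>
  ⟨hX, hA.trans hA'X, subset_empty_iff.1 (hB'X ▸ inter_subset_inter_left _ hB)⟩

theorem diff_mem_patternSet (hκ : ℵ₀ ≤ κ) {A B : Set Ordinal.{0}} (hA : A ⊆ Iio κ.ord)
    (hAB : Disjoint A B) (hB : #B < lift.{1} κ) : Iio κ.ord \ B ∈ patternSet κ A B :=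
  ⟨diff_mem_bigSets hκ hB, subset_sdiff.2 ⟨hA, hAB⟩, inter_sdiff_self _ _⟩

theorem mem_bigSets_disjoint_of_mem_subBig {X E : Set Ordinal.{0}}
    (hX : X ∈ subBig κ (Iio κ.ord \ E)) : X ∈ bigSets κ ∧ Disjoint X E :=
  ⟨⟨hX.1.trans sdiff_subset, hX.2⟩, (subset_sdiff.1 hX.1).2⟩

/-- A witness of the continuity of `c` at `X` for the `<γ`-box topology. -/
structure IsHomogeneousPattern (κ γ : Cardinal.{0}) (c : Set Ordinal.{0} → Ordinal.{0})
    (X A B : Set Ordinal.{0}) : Prop where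
  small_left : A ∈ smallSets κ γ
  small_right : B ∈ smallSets κ γ
  disjoint : Disjoint A B
  subset : A ⊆ X
  inter_eq_empty : B ∩ X = ∅
  apply_eq : ∀ Y ∈ patternSet κ A B, c Y = c X

namespace IsHomogeneousPattern

variable {c : Set Ordinal.{0} → Ordinal.{0}} {X A B : Set Ordinal.{0}}

theorem mk_union_lt (hγ : ℵ₀ ≤ γ) (h : IsHomogeneousPattern κ γ c X A B) :
    #(A ∪ B : Set Ordinal.{0}) < lift.{1} γ :=
  Cardinal.mk_union_lt (aleph0_le_lift.2 hγ) h.small_left.2 h.small_right.2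

theorem apply_eq_apply (hκ : ℵ₀ ≤ κ) (hγκ : γ ≤ κ) {X' A' B' : Set Ordinal.{0}}
    (h : IsHomogeneousPattern κ γ c X A B) (h' : IsHomogeneousPattern κ γ c X' A' B')
    (hAB' : Disjoint A B') (hA'B : Disjoint A' B) : c X = c X' := by
  have hBB' : #(B ∪ B' : Set Ordinal.{0}) < lift.{1} κ :=
    Cardinal.mk_union_lt (aleph0_le_lift.2 hκ) (h.small_right.2.trans_le (lift_le.2 hγκ))
      (h'.small_right.2.trans_le (lift_le.2 hγκ))
  have hY := diff_mem_patternSet hκ (union_subset h.small_left.1 h'.small_left.1)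
    (disjoint_union_left.2 ⟨disjoint_union_right.2 ⟨h.disjoint, hAB'⟩,
      disjoint_union_right.2 ⟨hA'B, h'.disjoint⟩⟩) hBB'
  exact (h.apply_eq _ (patternSet_anti subset_union_left subset_union_left hY)).symm.trans
    (h'.apply_eq _ (patternSet_anti subset_union_right subset_union_right hY))

end IsHomogeneousPattern

end Patterns

section Homogeneity

variable {γ κ : Cardinal.{0}} {c : Set Ordinal.{0} → Ordinal.{0}}
  {pA pB : Set Ordinal.{0} → Set Ordinal.{0}}

theorem exists_mk_le_forall_disjoint_apply_eq (hγ : ℵ₀ ≤ γ) (hγκ : γ < κ)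
    (hpat : ∀ X ∈ bigSets κ, IsHomogeneousPattern κ γ c X (pA X) (pB X)) :
    ∃ D : Set Ordinal.{0}, #D ≤ lift.{1} γ ∧ ∀ X ∈ bigSets κ, ∀ X' ∈ bigSets κ,
      Disjoint X D → Disjoint X' D → c X = c X' := by
  have hκ : ℵ₀ ≤ κ := hγ.trans hγκ.le
  have hbig : ∀ E : Set Ordinal.{0}, #E ≤ lift.{1} γ → Iio κ.ord \ E ∈ bigSets κ :=
    fun E hE => diff_mem_bigSets hκ (hE.trans_lt (lift_lt.2 hγκ))
  set f : Set Ordinal.{0} → Set Ordinal.{0} := fun E => pA (Iio κ.ord \ E) ∪ pB (Iio κ.ord \ E)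
  set C := cumulativeChain.{0} f
  have hC : ∀ j ≤ γ.ord, #(C j) ≤ lift.{1} γ := fun j hj =>
    mk_cumulativeChain_le _ (aleph0_le_lift.2 hγ)
      (fun E hE => ((hpat _ (hbig E hE)).mk_union_lt hγ).le) j
      (by rw [lift_uzero]; exact lift_le.2 (by simpa using Ordinal.card_le_card hj))
  have hdisj : (Iio γ.ord).PairwiseDisjoint fun j => pA (Iio κ.ord \ C j) :=
    pairwiseDisjoint_cumulativeChain _ (g := fun E => pA (Iio κ.ord \ E))
      (fun _ => subset_union_left) fun j hj =>
      disjoint_sdiff_left.mono_left (hpat _ (hbig _ (hC j hj.le))).subset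
  have hB_sub : ∀ j < γ.ord, pB (Iio κ.ord \ C j) ⊆ C γ.ord := fun j hj =>
    subset_union_right.trans (subset_cumulativeChain f hj)
  refine ⟨C γ.ord, hC _ le_rfl, fun X hX X' hX' hXD hX'D => ?_⟩
  obtain ⟨j, hj, hjB⟩ := exists_disjoint_of_pairwiseDisjoint hdisj (B := pB X ∪ pB X') (by
    simpa [mk_Iio_ordinal] using
      mk_union_lt (aleph0_le_lift.2 hγ) (hpat X hX).small_right.2 (hpat X' hX').small_right.2)
  have hXj : ∀ Y ∈ bigSets κ, Disjoint Y (C γ.ord) → Disjoint (pB Y) (pA (Iio κ.ord \ C j)) →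
      c Y = c (Iio κ.ord \ C j) := fun Y hY hYD hYB =>
    (hpat Y hY).apply_eq_apply hκ hγκ.le (hpat _ (hbig _ (hC j hj.le)))
      ((hYD.mono_left (hpat Y hY).subset).mono_right (hB_sub j hj)) hYB.symm
  exact (hXj X hX hXD (hjB.mono_left subset_union_left)).trans
    (hXj X' hX' hX'D (hjB.mono_left subset_union_right)).symm

theorem exists_mk_lt_forall_subBig_apply_eq (hreg : γ.IsRegular) (hγκ : γ < κ)
    (hpat : ∀ X ∈ bigSets κ, IsHomogeneousPattern κ γ c X (pA X) (pB X)) {D : Set Ordinal.{0}}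
    (hD : #D ≤ lift.{1} γ) {v : Ordinal.{0}} (hv : ∀ X ∈ bigSets κ, Disjoint X D → c X = v) :
    ∃ H ∈ bigSets κ, #(Iio κ.ord \ H : Set Ordinal.{0}) < lift.{1} γ ∧
      ∀ X ∈ subBig κ H, c X = v := by
  have hγ : ℵ₀ ≤ γ := hreg.aleph0_le
  have hκ : ℵ₀ ≤ κ := hγ.trans hγκ.le
  have hγ1 : ℵ₀ ≤ lift.{1} γ := aleph0_le_lift.2 hγ
  by_contra! hcon
  have hW : ∀ E : Set Ordinal.{0}, ∃ W, #E < lift.{1} γ →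
      W ∈ bigSets κ ∧ Disjoint W E ∧ c W ≠ v := by
    intro E
    by_cases hE : #E < lift.{1} γ
    · obtain ⟨W, hWE, hWv⟩ := hcon _ (diff_mem_bigSets hκ (hE.trans (lift_lt.2 hγκ)))
        ((mk_le_mk_of_subset (sdiff_sdiff_right_self _ _ ▸ inter_subset_right)).trans_lt hE)
      obtain ⟨hWb, hWE⟩ := mem_bigSets_disjoint_of_mem_subBig hWE
      exact ⟨W, fun _ => ⟨hWb, hWE, hWv⟩⟩
    · exact ⟨∅, fun h => absurd h hE⟩
  choose W hW using hW
  set f : Set Ordinal.{0} → Set Ordinal.{0} := fun E => pA (W E) ∪ pB (W E)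
  set C := cumulativeChain.{0} f
  have hC : ∀ j < γ.ord, #(C j) < lift.{1} γ := fun j hj =>
    mk_cumulativeChain_lt _ hreg.lift (fun E hE => (hpat _ (hW E hE).1).mk_union_lt hγ) j
      (by rw [lift_uzero]; exact lift_lt.2 (lt_ord.1 hj))
  have hdisj : (Iio γ.ord).PairwiseDisjoint fun j => pA (W (C j)) :=
    pairwiseDisjoint_cumulativeChain f (g := fun E => pA (W E)) (fun _ => subset_union_left)
      fun j hj => (hW _ (hC j hj)).2.1.mono_left (hpat _ (hW _ (hC j hj)).1).subset
  set U := ⋃ j < γ.ord, pB (W (C j))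
  have hU : #U ≤ lift.{1} γ := mk_biUnion_le_of_le_lift (by simp) hγ1 _ fun j hj =>
    (hpat _ (hW _ (hC j hj)).1).small_right.2.le
  have hZ : Iio κ.ord \ (D ∪ U) ∈ bigSets κ := diff_mem_bigSets hκ (mk_union_lt
    (aleph0_le_lift.2 hκ) (hD.trans_lt (lift_lt.2 hγκ)) (hU.trans_lt (lift_lt.2 hγκ)))
  obtain ⟨j, hj, hjB⟩ := exists_disjoint_of_pairwiseDisjoint hdisj
    (B := pB (Iio κ.ord \ (D ∪ U))) (by simpa [mk_Iio_ordinal] using (hpat _ hZ).small_right.2)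
  obtain ⟨hWj, -, hWv⟩ := hW _ (hC j hj)
  refine hWv (((hpat _ hZ).apply_eq_apply hκ hγκ.le (hpat _ hWj) ?_ hjB.symm).symm.trans
    (hv _ hZ (disjoint_sdiff_left.mono_right subset_union_left)))
  exact (disjoint_sdiff_left.mono_left (hpat _ hZ).subset).mono_right
    ((subset_biUnion_of_mem (u := fun j => pB (W (C j))) hj).trans subset_union_right)

theorem statement0_general (γ κ : Cardinal.{0}) (hγ : ℵ₀ ≤ γ) (hγκ : γ < κ)
    (c : Set Ordinal.{0} → Ordinal.{0})
    (hc_cont : ∀ X ∈ bigSets κ, ∃ A ∈ smallSets κ γ, ∃ B ∈ smallSets κ γ,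
      Disjoint A B ∧ A ⊆ X ∧ B ∩ X = ∅ ∧ ∀ Y ∈ patternSet κ A B, c Y = c X) :
    (∃ H ∈ bigSets κ, #(↥(Set.Iio κ.ord \ H)) ≤ Cardinal.lift.{1} γ ∧
      ∀ X ∈ subBig κ H, ∀ Y ∈ subBig κ H, c X = c Y) ∧
    (γ.IsRegular → ∃ H ∈ bigSets κ, #(↥(Set.Iio κ.ord \ H)) < Cardinal.lift.{1} γ ∧
      ∀ X ∈ subBig κ H, ∀ Y ∈ subBig κ H, c X = c Y) := by
  have hpat : ∀ X ∈ bigSets κ, ∃ A B, IsHomogeneousPattern κ γ c X A B := fun X hX =>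
    let ⟨A, hA, B, hB, hAB, hAX, hBX, hc⟩ := hc_cont X hX
    ⟨A, B, hA, hB, hAB, hAX, hBX, hc⟩
  choose! pA pB hpat using hpat
  obtain ⟨D, hD, hconst⟩ := exists_mk_le_forall_disjoint_apply_eq hγ hγκ hpat
  have hH : Iio κ.ord \ D ∈ bigSets κ :=
    diff_mem_bigSets (hγ.trans hγκ.le) (hD.trans_lt (lift_lt.2 hγκ))
  refine ⟨⟨Iio κ.ord \ D, hH, ?_, fun X hX Y hY => ?_⟩, fun hreg => ?_⟩
  · exact (mk_le_mk_of_subset (sdiff_sdiff_right_self _ _ ▸ inter_subset_right)).trans hD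
  · obtain ⟨hXb, hXD⟩ := mem_bigSets_disjoint_of_mem_subBig hX
    obtain ⟨hYb, hYD⟩ := mem_bigSets_disjoint_of_mem_subBig hY
    exact hconst X hXb Y hYb hXD hYD
  obtain ⟨H, hH', hHc, hv⟩ := exists_mk_lt_forall_subBig_apply_eq hreg hγκ hpat hD
    fun X hX hXD => hconst X hX _ hH hXD disjoint_sdiff_left
  exact ⟨H, hH', hHc, fun X hX Y hY => (hv X hX).trans (hv Y hY).symm⟩

/-- Let `γ < κ` be infinite cardinals and let
`c : [κ]^κ → γ` be continuous for the `<γ`-box topology `Σ([κ]^{<γ},[κ]^{<γ})`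
(equivalently: every `X ∈ [κ]^κ` matches a pattern `(A,B)` of disjoint sets in
`[κ]^{<γ}` with `c` constant on `[A;B]`).  Then there is `H ∈ [κ]^κ` with
`|κ - H| ≤ γ` on which `c` is constant; if moreover `γ` is regular, `H` can be
chosen with `|κ - H| < γ`. -/
theorem statement0 (γ κ : Cardinal.{0}) (hγ : ℵ₀ ≤ γ) (hγκ : γ < κ)
    (c : Set Ordinal.{0} → Ordinal.{0})
    (hc_range : ∀ X ∈ bigSets κ, c X < γ.ord)
    (hc_cont : ∀ X ∈ bigSets κ, ∃ A ∈ smallSets κ γ, ∃ B ∈ smallSets κ γ,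
      Disjoint A B ∧ A ⊆ X ∧ B ∩ X = ∅ ∧ ∀ Y ∈ patternSet κ A B, c Y = c X) :
    (∃ H ∈ bigSets κ, #(↥(Set.Iio κ.ord \ H)) ≤ Cardinal.lift.{1} γ ∧
      ∀ X ∈ subBig κ H, ∀ Y ∈ subBig κ H, c X = c Y) ∧
    (γ.IsRegular → ∃ H ∈ bigSets κ, #(↥(Set.Iio κ.ord \ H)) < Cardinal.lift.{1} γ ∧
      ∀ X ∈ subBig κ H, ∀ Y ∈ subBig κ H, c X = c Y) :=
  statement0_general γ κ hγ hγκ c hc_cont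

end Homogeneity
end

section
/- Let γ < κ be infinite cardinals. Then every set in Δ([κ]^{<γ}, [κ]^{<γ}) is Ramsey; in fact, for every 𝒮 ∈ Δ([κ]^{<γ}, [κ]^{<γ}) there is a set H ∈ [κ]^κ with |κ − H| ≤ γ such that either [H]^κ ⊆ 𝒮 or [H]^κ ∩ 𝒮 = ∅. -/
/-!
Write `𝒮 = ⋃_{p ∈ Q} [A_p; B_p]` and its complement as `⋃_{q ∈ Q'} [A_q; B_q]`. Any two such
patterns cross: `A_p` meets `B_q` or `A_q` meets `B_p`, since otherwise `κ \ (B_p ∪ B_q)` lies in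
both sets. If some `C` with `|C| ≤ γ` meets every `A_p`, then no `X ⊆ κ \ C` matches a pattern of
`Q`, so `H = κ \ C` is homogeneous; symmetrically for `Q'`. Otherwise choose, by recursion on
`β < γ`, patterns `q_β ∈ Q'` whose `A_{q_β}` avoids all earlier chosen patterns (a set of size
`≤ γ`), and then `p ∈ Q` whose `A_p` avoids all of them. Crossing forces every `A_{q_β}` to meet
`B_p`; as the `A_{q_β}` are pairwise disjoint, `|B_p| ≥ γ`, a contradiction.
-/

open Set Cardinal

universe u

universe v

open Function

section TransfiniteUnion

variable {α : Type u} (h : Set α → Set α)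

noncomputable def transfiniteUnion : Ordinal.{v} → Set α :=
  WellFoundedLT.fix fun o F => ⋃ (β) (hβ : β < o), h (F β hβ)

theorem transfiniteUnion_eq (o : Ordinal.{v}) :
    transfiniteUnion h o = ⋃ β < o, h (transfiniteUnion h β) :=
  WellFoundedLT.fix_eq _ o

theorem subset_transfiniteUnion {β o : Ordinal.{v}} (hβ : β < o) :
    h (transfiniteUnion h β) ⊆ transfiniteUnion h o := by
  rw [transfiniteUnion_eq h o]
  exact subset_biUnion_of_mem (u := fun β => h (transfiniteUnion h β)) hβ

theorem mk_transfiniteUnion_le {γ : Cardinal.{u}} (hγ : ℵ₀ ≤ γ) (hh : ∀ C, #(h C) ≤ γ)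
    {o : Ordinal.{u}} (ho : o.card ≤ γ) : #(transfiniteUnion h o) ≤ γ := by
  rw [transfiniteUnion_eq]
  exact mk_biUnion_le_of_le ho hγ _ fun β _ => hh _

end TransfiniteUnion

theorem lift_mk_le_of_pairwise_disjoint {α : Type u} {ι : Type v} {f : ι → Set α} {B : Set α}
    (hf : Pairwise (Disjoint on f)) (hB : ∀ i, (f i ∩ B).Nonempty) :
    lift.{u} #ι ≤ lift.{v} #B := by
  choose x hx using hB
  refine lift_mk_le_lift_mk_of_injective (f := fun i => (⟨x i, (hx i).2⟩ : B)) fun i j hij => ?_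
  by_contra hne
  exact (hf hne).ne_of_mem (hx i).1 (hx j).1 (congrArg Subtype.val hij)

theorem exists_small_transversal {α : Type u} {γ : Cardinal.{u}} (hγ : ℵ₀ ≤ γ)
    {P P' : Set (Set α × Set α)} (hP : ∀ p ∈ P, #p.2 < γ)
    (hP' : ∀ p ∈ P', #p.1 ≤ γ ∧ #p.2 ≤ γ)
    (hcross : ∀ p ∈ P, ∀ p' ∈ P', ¬Disjoint p.1 p'.2 ∨ ¬Disjoint p'.1 p.2) :
    ∃ C : Set α, #C ≤ γ ∧ ((∀ p ∈ P, ¬Disjoint p.1 C) ∨ ∀ p ∈ P', ¬Disjoint p.1 C) := by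
  by_contra! hbad
  have hnext : ∀ C : Set α, ∃ q : Set α × Set α,
      #↥(q.1 ∪ q.2) ≤ γ ∧ (#C ≤ γ → q ∈ P' ∧ Disjoint q.1 C) := by
    intro C
    by_cases hC : #C ≤ γ
    · obtain ⟨q, hq, hqC⟩ := (hbad C hC).2
      exact ⟨q, (mk_union_le _ _).trans (add_le_of_le hγ (hP' q hq).1 (hP' q hq).2),
        fun _ => ⟨hq, hqC⟩⟩
    · exact ⟨(∅, ∅), by simp, fun h => absurd h hC⟩
  choose g hg_card hg using hnext
  let supp : Set α → Set α := fun C => (g C).1 ∪ (g C).2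
  set F := transfiniteUnion supp
  have hF : ∀ o : Ordinal, o.card ≤ γ → #(F o) ≤ γ := fun o ho =>
    mk_transfiniteUnion_le supp hγ hg_card ho
  have hγord : γ.ord.card ≤ γ := (card_ord γ).le
  obtain ⟨p, hp, hpF⟩ := (hbad (F γ.ord) (hF _ hγord)).1
  have hstage : ∀ β : Iio γ.ord, g (F β) ∈ P' ∧ Disjoint (g (F β)).1 (F β) := fun β =>
    hg _ (hF _ ((Ordinal.card_le_card β.2.le).trans hγord))
  have hdisj : Pairwise (Disjoint on fun β : Iio γ.ord => (g (F β)).1) :=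
    (pairwise_disjoint_on _).2 fun β δ h =>
      ((hstage δ).2.mono_right (subset_union_left.trans (subset_transfiniteUnion supp h))).symm
  have hmeet : ∀ β : Iio γ.ord, ((g (F β)).1 ∩ p.2).Nonempty := fun β =>
    not_disjoint_iff_nonempty_inter.1 <| (hcross p hp _ (hstage β).1).resolve_left <|
      not_not.2 (hpF.mono_right (subset_union_right.trans (subset_transfiniteUnion supp β.2)))
  have hγp := lift_mk_le_of_pairwise_disjoint hdisj hmeet
  rw [Cardinal.mk_Iio_ordinal, card_ord, lift_lift, lift_le] at hγp
  exact (hP p hp).not_ge hγp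

theorem sdiff_mem_bigSets {κ : Cardinal.{0}} (hκ : ℵ₀ ≤ κ) {T : Set Ordinal.{0}}
    (hT : #T < lift.{1} κ) : Iio κ.ord \ T ∈ bigSets κ := by
  have hIio : #(Iio κ.ord) = lift.{1} κ := by rw [Cardinal.mk_Iio_ordinal, card_ord]
  refine ⟨sdiff_subset, le_antisymm ((mk_le_mk_of_subset sdiff_subset).trans_eq hIio) ?_⟩
  by_contra! hlt
  exact ((le_mk_sdiff_add_mk _ T).trans_lt (add_lt_of_lt (aleph0_le_lift.2 hκ) hlt hT)).ne hIio

theorem matches_sdiff {U T A B : Set Ordinal.{0}} (hA : A ⊆ U) (hAT : Disjoint A T)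
    (hBT : B ⊆ T) : Matches (U \ T) A B :=
  ⟨subset_sdiff.2 ⟨hA, hAT⟩, disjoint_iff_inter_eq_empty.1 (disjoint_sdiff_right.mono_left hBT)⟩

theorem not_disjoint_or_of_patternSet {κ : Cardinal.{0}} (hκ : ℵ₀ ≤ κ)
    {S : Set (Set Ordinal.{0})} {A B A' B' : Set Ordinal.{0}}
    (hA : A ⊆ Iio κ.ord) (hAB : Disjoint A B) (hB : #B < lift.{1} κ)
    (hA' : A' ⊆ Iio κ.ord) (hAB' : Disjoint A' B') (hB' : #B' < lift.{1} κ)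
    (hS : patternSet κ A B ⊆ S) (hS' : patternSet κ A' B' ∩ S = ∅) :
    ¬Disjoint A B' ∨ ¬Disjoint A' B := by
  by_contra! h
  have hX := sdiff_mem_bigSets hκ ((mk_union_le B B').trans_lt (add_lt_of_lt
    (aleph0_le_lift.2 hκ) hB hB'))
  have hm := matches_sdiff hA (disjoint_union_right.2 ⟨hAB, h.1⟩) subset_union_left
  have hm' := matches_sdiff hA' (disjoint_union_right.2 ⟨h.2, hAB'⟩) subset_union_right
  exact hS'.subset ⟨⟨hX, hm'⟩, hS ⟨hX, hm⟩⟩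

theorem patternSet_subset_of_mem {κ : Cardinal.{0}} {Q : Set (Set Ordinal.{0} × Set Ordinal.{0})}
    {p : Set Ordinal.{0} × Set Ordinal.{0}} (hp : p ∈ Q) :
    patternSet κ p.1 p.2 ⊆ {X ∈ bigSets κ | ∃ p ∈ Q, Matches X p.1 p.2} :=
  fun _ hX => ⟨hX.1, p, hp, hX.2⟩

theorem subBig_sdiff_inter_eq_empty {κ : Cardinal.{0}} {U C : Set Ordinal.{0}}
    {Q : Set (Set Ordinal.{0} × Set Ordinal.{0})} (hQ : ∀ p ∈ Q, ¬Disjoint p.1 C) :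
    subBig κ (U \ C) ∩ {X ∈ bigSets κ | ∃ p ∈ Q, Matches X p.1 p.2} = ∅ :=
  eq_empty_iff_forall_notMem.2 fun _ ⟨⟨hXH, _⟩, _, p, hp, hm⟩ =>
    hQ p hp (subset_sdiff.1 (hm.1.trans hXH)).2

/-- Let `γ < κ` be infinite cardinals.  Every
`𝒮 ∈ Δ([κ]^{<γ}, [κ]^{<γ})` is Ramsey; in fact there is `H ∈ [κ]^κ` with
`|κ - H| ≤ γ` such that `[H]^κ ⊆ 𝒮` or `[H]^κ ∩ 𝒮 = ∅`. -/
theorem statement1 (γ κ : Cardinal.{0}) (hγ : ℵ₀ ≤ γ) (hγκ : γ < κ)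
    (S : Set (Set Ordinal.{0}))
    (hS : S ∈ DeltaFam κ (smallSets κ γ) (smallSets κ γ)) :
    ∃ H ∈ bigSets κ, #(↥(Set.Iio κ.ord \ H)) ≤ Cardinal.lift.{1} γ ∧
      (subBig κ H ⊆ S ∨ subBig κ H ∩ S = ∅) := by
  obtain ⟨⟨Q, hQ, rfl⟩, Q', hQ', hQ'S⟩ := hS
  have hκ : ℵ₀ ≤ κ := hγ.trans hγκ.le
  have hγκ' : lift.{1} γ < lift.{1} κ := lift_lt.2 hγκ
  have hcross : ∀ p ∈ Q, ∀ p' ∈ Q', ¬Disjoint p.1 p'.2 ∨ ¬Disjoint p'.1 p.2 := by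
    intro p hp p' hp'
    obtain ⟨hA, hB, hAB⟩ := hQ p hp
    obtain ⟨hA', hB', hAB'⟩ := hQ' p' hp'
    refine not_disjoint_or_of_patternSet hκ hA.1 hAB (hB.2.trans hγκ') hA'.1 hAB'
      (hB'.2.trans hγκ') (patternSet_subset_of_mem hp) ?_
    exact eq_empty_iff_forall_notMem.2 fun X ⟨hX, hXS⟩ =>
      (hQ'S.symm.subset (patternSet_subset_of_mem hp' hX)).2 hXS
  obtain ⟨C, hC, hmeet⟩ := exists_small_transversal (aleph0_le_lift.2 hγ)
    (fun p hp => (hQ p hp).2.1.2) (fun p hp => ⟨(hQ' p hp).1.2.le, (hQ' p hp).2.1.2.le⟩) hcross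
  refine ⟨Iio κ.ord \ C, sdiff_mem_bigSets hκ (hC.trans_lt hγκ'), ?_, ?_⟩
  · rw [Set.sdiff_sdiff_right_self]
    exact (mk_le_mk_of_subset inter_subset_right).trans hC
  rcases hmeet with hmeet | hmeet
  · exact Or.inr (subBig_sdiff_inter_eq_empty hmeet)
  · refine Or.inl fun X hX => by_contra fun hXS => ?_
    have hX' : X ∈ bigSets κ := ⟨hX.1.trans sdiff_subset, hX.2⟩
    exact (subBig_sdiff_inter_eq_empty hmeet).subset ⟨hX, hQ'S ▸ ⟨hX', hXS⟩⟩
end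

section
/- Let κ be an infinite cardinal that is not weakly compact, in the sense that there exists a coloring c : [κ]^2 → 2 such that there is no H ⊆ κ of cardinality κ with c constant on the 2-element subsets of H. Then there is a set 𝒮 ∈ Δ([κ]^2, [κ]^{<κ}) that is not Ramsey. -/
open Set Cardinal

universe u

/-!
Colour each `X ∈ [κ]^κ` by the value of `c` on its two least elements `α < β`. The sets with
least pair `{α, β}` are exactly those matching `({α, β}, β \ {α})`, and `β \ {α}` has fewer
than `κ` elements, so each colour class lies in `Σ([κ]^2, [κ]^{<κ})`; hence so do `𝒮`, the
class of colour `0`, and its complement. Every pair `α < β` from `H ∈ [κ]^κ` is the least pair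
of `{α, β} ∪ (H \ [0, β])`, a member of `[H]^κ`, so an `H` homogeneous for `𝒮` would be
homogeneous for `c`.
-/

section FirstPair

variable {α : Type*} [ConditionallyCompleteLinearOrder α]

noncomputable def firstPair (X : Set α) : Set α :=
  {sInf X, sInf (X \ {sInf X})}

lemma firstPair_eq_of_isLeast {X : Set α} {a b : α} (ha : IsLeast X a)
    (hb : IsLeast (X \ {a}) b) : firstPair X = {a, b} := by
  rw [firstPair, ha.csInf_eq, hb.csInf_eq]

lemma Set.Nontrivial.exists_isLeast_isLeast_sdiff [WellFoundedLT α] {X : Set α}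
    (hX : X.Nontrivial) : ∃ a b, a < b ∧ IsLeast X a ∧ IsLeast (X \ {a}) b := by
  have ha := isLeast_csInf hX.nonempty
  obtain ⟨y, hyX, hy⟩ := hX.exists_ne (sInf X)
  have hb := isLeast_csInf (s := X \ {sInf X}) ⟨y, hyX, hy⟩
  exact ⟨_, _, (ha.2 hb.1.1).lt_of_ne (Ne.symm hb.1.2), ha, hb⟩

end FirstPair

lemma Cardinal.mk_sdiff_eq_of_mk_lt {α : Type*} {S T : Set α} (hS : ℵ₀ ≤ #S) (hT : #T < #S) :
    #(S \ T : Set α) = #S := by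
  refine (mk_le_mk_of_subset sdiff_subset).antisymm (not_lt.mp fun h => ?_)
  exact ((le_mk_sdiff_add_mk S T).trans_lt (add_lt_of_lt hS h hT)).false

lemma mk_Iio_lt_lift {κ : Cardinal.{0}} {β : Ordinal.{0}} (hβ : β < κ.ord) :
    #(Iio β) < Cardinal.lift.{1} κ := by
  rw [Cardinal.mk_Iio_ordinal]
  exact Cardinal.lift_lt.mpr (Cardinal.lt_ord.mp hβ)

lemma matches_pair_iff {X : Set Ordinal.{0}} {α β : Ordinal.{0}} (hαβ : α < β) :
    Matches X {α, β} (Iio β \ {α}) ↔ IsLeast X α ∧ IsLeast (X \ {α}) β := by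
  simp only [Matches, insert_subset_iff, singleton_subset_iff, eq_empty_iff_forall_notMem,
    IsLeast, lowerBounds, mem_inter_iff, mem_sdiff, mem_Iio, mem_singleton_iff, mem_ofPred_eq]
  constructor
  · rintro ⟨⟨hα, hβ⟩, hgap⟩
    refine ⟨⟨hα, fun x hx => not_lt.mp fun hxα => hgap x ⟨⟨hxα.trans hαβ, hxα.ne⟩, hx⟩⟩,
      ⟨hβ, hαβ.ne'⟩, fun x ⟨hx, hxα⟩ => not_lt.mp fun hxβ => hgap x ⟨⟨hxβ, hxα⟩, hx⟩⟩
  · rintro ⟨⟨hα, -⟩, ⟨hβ, -⟩, hmin⟩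
    exact ⟨⟨hα, hβ⟩, fun x ⟨⟨hxβ, hxα⟩, hx⟩ => (hmin ⟨hx, hxα⟩).not_gt hxβ⟩

lemma firstPair_preimage_mem_sigmaFam {κ : Cardinal.{0}} (hκ : ℵ₀ ≤ κ)
    (P : Set Ordinal.{0} → Prop) :
    {X ∈ bigSets κ | P (firstPair X)} ∈ SigmaFam κ (nSets κ 2) (smallSets κ κ) := by
  refine ⟨{p | ∃ α β, α < β ∧ β < κ.ord ∧ p = ({α, β}, Iio β \ {α}) ∧ P {α, β}}, ?_, ?_⟩
  · rintro _ ⟨α, β, hαβ, hβ, rfl, -⟩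
    refine ⟨⟨?_, ?_⟩, ⟨fun x hx => hx.1.trans hβ, ?_⟩, ?_⟩
    · simpa [insert_subset_iff] using ⟨hαβ.trans hβ, hβ⟩
    · rw [Cardinal.mk_insert (by simpa using hαβ.ne), Cardinal.mk_singleton]
      norm_num
    · exact (Cardinal.mk_le_mk_of_subset sdiff_subset).trans_lt (mk_Iio_lt_lift hβ)
    · simp [disjoint_left]
  · ext X
    constructor
    · rintro ⟨hXbig, hP⟩
      have hX : X.Nontrivial := by
        refine Set.Infinite.nontrivial ?_
        rw [← infinite_coe_iff, Cardinal.infinite_iff, hXbig.2]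
        exact Cardinal.aleph0_le_lift.mpr hκ
      obtain ⟨α, β, hαβ, hα, hβ⟩ := hX.exists_isLeast_isLeast_sdiff
      rw [firstPair_eq_of_isLeast hα hβ] at hP
      exact ⟨hXbig, _, ⟨α, β, hαβ, hXbig.1 hβ.1.1, rfl, hP⟩, (matches_pair_iff hαβ).mpr ⟨hα, hβ⟩⟩
    · rintro ⟨hXbig, _, ⟨α, β, hαβ, -, rfl, hP⟩, hmatch⟩
      obtain ⟨hα, hβ⟩ := (matches_pair_iff hαβ).mp hmatch
      exact ⟨hXbig, by rwa [firstPair_eq_of_isLeast hα hβ]⟩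

lemma firstPair_preimage_mem_deltaFam {κ : Cardinal.{0}} (hκ : ℵ₀ ≤ κ)
    (P : Set Ordinal.{0} → Prop) :
    {X ∈ bigSets κ | P (firstPair X)} ∈ DeltaFam κ (nSets κ 2) (smallSets κ κ) := by
  have hcompl : bigSets κ \ {X ∈ bigSets κ | P (firstPair X)} =
      {X ∈ bigSets κ | ¬ P (firstPair X)} := by
    ext X
    simp only [mem_sdiff, mem_ofPred_eq]
    tauto
  exact ⟨firstPair_preimage_mem_sigmaFam hκ P, hcompl ▸ firstPair_preimage_mem_sigmaFam hκ (¬ P ·)⟩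

lemma subBig_subset_bigSets {κ : Cardinal.{0}} {H : Set Ordinal.{0}} (hH : H ⊆ Iio κ.ord) :
    subBig κ H ⊆ bigSets κ :=
  fun _ hX => ⟨hX.1.trans hH, hX.2⟩

lemma exists_mem_subBig_firstPair_eq {κ : Cardinal.{0}} (hκ : ℵ₀ ≤ κ) {H : Set Ordinal.{0}}
    (hH : H ∈ bigSets κ) {α β : Ordinal.{0}} (hα : α ∈ H) (hβ : β ∈ H) (hαβ : α < β) :
    ∃ X ∈ subBig κ H, firstPair X = {α, β} := by
  have hsucc : Order.succ β < κ.ord := (Cardinal.isSuccLimit_ord hκ).succ_lt (hH.1 hβ)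
  have htail : #(H \ Iic β : Set Ordinal.{0}) = Cardinal.lift.{1} κ := by
    rw [Cardinal.mk_sdiff_eq_of_mk_lt, hH.2]
    · exact hH.2 ▸ Cardinal.aleph0_le_lift.mpr hκ
    · exact hH.2 ▸ Order.Iio_succ β ▸ mk_Iio_lt_lift hsucc
  have hXH : insert α (insert β (H \ Iic β)) ⊆ H :=
    insert_subset hα (insert_subset hβ sdiff_subset)
  refine ⟨_, ⟨hXH, le_antisymm ?_ ?_⟩, firstPair_eq_of_isLeast ?_ ?_⟩
  · exact hH.2 ▸ Cardinal.mk_le_mk_of_subset hXH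
  · exact htail.ge.trans <|
      Cardinal.mk_le_mk_of_subset ((subset_insert _ _).trans (subset_insert _ _))
  · refine ⟨mem_insert _ _, ?_⟩
    rintro x (rfl | rfl | ⟨-, hx⟩)
    exacts [le_rfl, hαβ.le, (hαβ.trans (not_le.mp hx)).le]
  · refine ⟨⟨mem_insert_of_mem _ (mem_insert _ _), hαβ.ne'⟩, ?_⟩
    rintro x ⟨rfl | rfl | ⟨-, hx⟩, hxα⟩
    exacts [(hxα rfl).elim, le_rfl, (not_le.mp hx).le]

lemma exists_homogeneous_of_isRamsey {κ : Cardinal.{0}} (hκ : ℵ₀ ≤ κ) {P : Set Ordinal.{0} → Prop}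
    (hR : IsRamsey κ {X ∈ bigSets κ | P (firstPair X)}) :
    ∃ H ∈ bigSets κ, (∀ α ∈ H, ∀ β ∈ H, α < β → P {α, β}) ∨
      (∀ α ∈ H, ∀ β ∈ H, α < β → ¬ P {α, β}) := by
  obtain ⟨H, hH, hsub | hdisj⟩ := hR
  · refine ⟨H, hH, Or.inl fun α hα β hβ hαβ => ?_⟩
    obtain ⟨X, hX, hXpair⟩ := exists_mem_subBig_firstPair_eq hκ hH hα hβ hαβ
    exact hXpair ▸ (hsub hX).2
  · refine ⟨H, hH, Or.inr fun α hα β hβ hαβ hP => ?_⟩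
    obtain ⟨X, hX, hXpair⟩ := exists_mem_subBig_firstPair_eq hκ hH hα hβ hαβ
    exact (eq_empty_iff_forall_notMem.mp hdisj) X
      ⟨hX, subBig_subset_bigSets hH.1 hX, hXpair ▸ hP⟩

lemma exists_lt_eq_pair_of_mem_nSets_two {κ : Cardinal.{0}} {A : Set Ordinal.{0}}
    (hA : A ∈ nSets κ 2) : ∃ α β, α < β ∧ A = {α, β} := by
  have hA2 : A.ncard = 2 := by
    rw [← Nat.card_coe_set_eq, Nat.card, hA.2, Cardinal.toNat_natCast]
  obtain ⟨α, β, hne, rfl⟩ := Set.ncard_eq_two.mp hA2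
  rcases hne.lt_or_gt with h | h
  · exact ⟨α, β, h, rfl⟩
  · exact ⟨β, α, h, pair_comm _ _⟩

/-- If the infinite cardinal `κ` is not weakly compact, in the
sense that some coloring `c : [κ]^2 → 2` admits no homogeneous set of
cardinality `κ`, then some `𝒮 ∈ Δ([κ]^2, [κ]^{<κ})` is not Ramsey. -/
theorem statement4 (κ : Cardinal.{0}) (hκ : ℵ₀ ≤ κ)
    (hwc : ∃ c : Set Ordinal.{0} → Fin 2,
      ¬ ∃ H, H ⊆ Set.Iio κ.ord ∧ #H = Cardinal.lift.{1} κ ∧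
        ∀ A₁ ∈ nSets κ 2, ∀ A₂ ∈ nSets κ 2, A₁ ⊆ H → A₂ ⊆ H → c A₁ = c A₂) :
    ∃ S ∈ DeltaFam κ (nSets κ 2) (smallSets κ κ), ¬ IsRamsey κ S := by
  obtain ⟨c, hc⟩ := hwc
  refine ⟨_, firstPair_preimage_mem_deltaFam hκ (c · = 0), fun hR => hc ?_⟩
  obtain ⟨H, hH, hhom⟩ := exists_homogeneous_of_isRamsey hκ (P := (c · = 0)) hR
  refine ⟨H, hH.1, hH.2, fun A₁ hA₁ A₂ hA₂ h₁ h₂ => ?_⟩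
  obtain ⟨α₁, β₁, hlt₁, rfl⟩ := exists_lt_eq_pair_of_mem_nSets_two hA₁
  obtain ⟨α₂, β₂, hlt₂, rfl⟩ := exists_lt_eq_pair_of_mem_nSets_two hA₂
  rw [insert_subset_iff, singleton_subset_iff] at h₁ h₂
  rcases hhom with hzero | hnonzero
  · rw [hzero _ h₁.1 _ h₁.2 hlt₁, hzero _ h₂.1 _ h₂.2 hlt₂]
  · have := hnonzero _ h₁.1 _ h₁.2 hlt₁
    have := hnonzero _ h₂.1 _ h₂.2 hlt₂
    omega
end

section
/- Let κ be an infinite cardinal, let X ∈ [κ]^κ, let n ∈ ω, and let 𝒬 be a set of patterns such that each n-element subset A of X has an associated set B_A with (A, B_A) ∈ 𝒬. Suppose X is fast for A ↦ B_A. Then every X' ∈ [X]^κ matches some pattern in 𝒬. -/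
/-! Let `A` consist of the `n` least elements of `X'`. Every element of `X'` below `sup A` then
lies in `A`, so fastness gives `B_A ∩ X' ⊆ A`, and this is empty because `A` and `B_A` are
disjoint. Infinitude of `X'` is what guarantees that `n` least elements exist. -/

open Set Cardinal

universe u

/-- `X` is *fast* for the assignment `A ↦ B A` (on `n`-element subsets of `X`):
for each `A ∈ [X]^n`, every element of `B A ∩ X` is `< sup A`. -/
def Fast (n : ℕ) (X : Set Ordinal.{0}) (B : Set Ordinal.{0} → Set Ordinal.{0}) : Prop :=
  ∀ A, A ⊆ X → #A = n → ∀ b ∈ B A ∩ X, b < sSup A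

section InitialSegment

variable {α : Type*} [ConditionallyCompleteLinearOrderBot α] [WellFoundedLT α]

theorem Set.Infinite.exists_finset_card_eq_forall_lt_sSup_mem {S : Set α} (hS : S.Infinite)
    (n : ℕ) :
    ∃ A : Finset α, ↑A ⊆ S ∧ A.card = n ∧ ∀ x ∈ S, x < sSup (A : Set α) → x ∈ A := by
  induction n with
  | zero => exact ⟨∅, by simp, rfl, fun x _ hx => absurd hx (by simp)⟩
  | succ n ih =>
    obtain ⟨A, hAS, hcard, hinit⟩ := ih
    obtain ⟨m, ⟨hmS, hmA⟩, hmin⟩ :=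
      wellFounded_lt.has_min _ (hS.sdiff A.finite_toSet).nonempty
    have hAm : ∀ a ∈ A, a ≤ m := fun a ha =>
      (le_csSup A.bddAbove ha).trans (not_lt.1 fun h => hmA (hinit m hmS h))
    have hsup : sSup ((insert m A : Finset α) : Set α) = m := by
      rw [Finset.coe_insert]
      exact IsGreatest.csSup_eq ⟨mem_insert _ _, by simpa [upperBounds] using hAm⟩
    refine ⟨insert m A, by simpa [insert_subset_iff] using ⟨hmS, hAS⟩,
      by rw [Finset.card_insert_of_notMem hmA, hcard], fun x hxS hx => ?_⟩
    rw [hsup] at hx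
    by_contra hxA
    exact hmin x ⟨hxS, fun h => hxA (Finset.mem_insert_of_mem h)⟩ hx

end InitialSegment

theorem Fast.matches {n : ℕ} {X X' A : Set Ordinal.{0}} {B : Set Ordinal.{0} → Set Ordinal.{0}}
    (hfast : Fast n X B) (hX' : X' ⊆ X) (hAX' : A ⊆ X') (hA : #A = n)
    (hinit : ∀ x ∈ X', x < sSup A → x ∈ A) (hdisj : Disjoint A (B A)) :
    Matches X' A (B A) := by
  refine ⟨hAX', eq_empty_of_forall_notMem fun b ⟨hbB, hbX'⟩ => ?_⟩
  have hbA : b ∈ A := hinit b hbX' (hfast A (hAX'.trans hX') hA b ⟨hbB, hX' hbX'⟩)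
  exact hdisj.notMem_of_mem_left hbA hbB

theorem statement5_general (κ : Cardinal.{0}) (hκ : ℵ₀ ≤ κ)
    (X : Set Ordinal.{0}) (n : ℕ)
    (Q : Set (Set Ordinal.{0} × Set Ordinal.{0}))
    (hQ : ∀ p ∈ Q, p.1 ⊆ Set.Iio κ.ord ∧ p.2 ⊆ Set.Iio κ.ord ∧ Disjoint p.1 p.2)
    (B : Set Ordinal.{0} → Set Ordinal.{0})
    (hB : ∀ A, A ⊆ X → #A = n → (A, B A) ∈ Q)
    (hfast : Fast n X B) :
    ∀ X' ∈ subBig κ X, ∃ p ∈ Q, Matches X' p.1 p.2 := by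
  rintro X' ⟨hX'X, hX'card⟩
  have hinf : X'.Infinite :=
    infinite_coe_iff.1 (Cardinal.infinite_iff.2 (hX'card ▸ aleph0_le_lift.2 hκ))
  obtain ⟨A, hAX', hcard, hinit⟩ := hinf.exists_finset_card_eq_forall_lt_sSup_mem n
  have hA : #(A : Set Ordinal.{0}) = n := by rw [← hcard, Finset.coe_sort_coe, mk_coe_finset]
  have hAQ := hB _ (hAX'.trans hX'X) hA
  exact ⟨_, hAQ, hfast.matches hX'X hAX' hA hinit (hQ _ hAQ).2.2⟩

/-- Suppose `X ∈ [κ]^κ`, `𝒬` is a set of patterns, each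
`A ∈ [X]^n` has an associated `B A` with `(A, B A) ∈ 𝒬`, and `X` is fast for
`A ↦ B A`.  Then every `X' ∈ [X]^κ` matches some pattern in `𝒬`. -/
theorem statement5 (κ : Cardinal.{0}) (hκ : ℵ₀ ≤ κ)
    (X : Set Ordinal.{0}) (hX : X ∈ bigSets κ) (n : ℕ)
    (Q : Set (Set Ordinal.{0} × Set Ordinal.{0}))
    (hQ : ∀ p ∈ Q, p.1 ⊆ Set.Iio κ.ord ∧ p.2 ⊆ Set.Iio κ.ord ∧ Disjoint p.1 p.2)
    (B : Set Ordinal.{0} → Set Ordinal.{0})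
    (hB : ∀ A, A ⊆ X → #A = n → (A, B A) ∈ Q)
    (hfast : Fast n X B) :
    ∀ X' ∈ subBig κ X, ∃ p ∈ Q, Matches X' p.1 p.2 :=
  statement5_general κ hκ X n Q hQ B hB hfast
end

section
/- Let κ be an infinite regular cardinal, let X ∈ [κ]^κ, let n ∈ ω, and let 𝒬 be a set of ([κ]^n, [κ]^{<κ})-patterns such that each n-element subset A of X has an associated set B_A with (A, B_A) ∈ 𝒬. Then there is some X' ∈ [X]^κ that is fast for A ↦ B_A. -/
open Set Cardinal

universe u

/-! Let `g ξ` bound every `B A` with `A ∈ [X]^n` and `A ⊆ ξ + 1`; there are fewer than `κ`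
such `A`, each `B A` is bounded below `κ`, so by regularity `g` maps `κ` into `κ`. A transfinite
recursion picks an increasing `κ`-sequence in `X` above `g 0` whose every term lies above `g` of
all earlier terms. If `b ∈ B A` belonged to this set and `b ≥ max A`, then `b ≠ max A` by
disjointness, so `b > max A` and hence `b > g (max A) ≥ b`. -/

namespace Cardinal

theorem sSup_lt_ord_of_isRegular {κ : Cardinal.{u}} (hκ : κ.IsRegular) {s : Set Ordinal.{u}}
    (hs : s ⊆ Iio κ.ord) (hc : #s < lift.{u + 1} κ) : sSup s < κ.ord :=
  Ordinal.sSup_lt_of_lt_cof (by rwa [← Ordinal.lift_cof, hκ.cof_ord]) hs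

theorem mk_Iic_lt_of_lt_ord {κ : Cardinal.{u}} (hκ : ℵ₀ ≤ κ) {ξ : Ordinal.{u}}
    (hξ : ξ < κ.ord) : #(Iic ξ) < lift.{u + 1} κ := by
  refine (mk_le_mk_of_subset (Iic_subset_Iio.2 (lt_add_one ξ))).trans_lt ?_
  rw [mk_Iio_ordinal, lift_lt, ← lt_ord]
  exact (isSuccLimit_ord hκ).add_one_lt hξ

theorem exists_lt_of_mk_eq {κ : Cardinal.{u}} (hκ : ℵ₀ ≤ κ) {X : Set Ordinal.{u}}
    (hc : #X = lift.{u + 1} κ) {o : Ordinal.{u}} (ho : o < κ.ord) : ∃ x ∈ X, o < x := by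
  by_contra! h
  exact (mk_le_mk_of_subset h).not_gt (hc ▸ mk_Iic_lt_of_lt_ord hκ ho)

theorem mk_finite_subsets_lt {α : Type u} {s : Set α} {c : Cardinal.{u}} (hc : ℵ₀ ≤ c)
    (hs : #s < c) : #{A : Set α | A ⊆ s ∧ A.Finite} < c := by
  have hrange : {A : Set α | A ⊆ s ∧ A.Finite} ⊆
      range fun t : Finset s => Subtype.val '' (t : Set s) := by
    rintro A ⟨hAs, hA⟩
    refine ⟨(hA.preimage Subtype.val_injective.injOn).toFinset, ?_⟩
    simpa [Subtype.image_preimage_coe] using hAs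
  refine (mk_le_mk_of_subset hrange).trans_lt (mk_range_le.trans_lt ?_)
  rcases finite_or_infinite s with hfin | hinf
  · exact (lt_aleph0_of_finite _).trans_le hc
  · rwa [mk_finset_of_infinite]

theorem finite_of_mk_eq_natCast {α : Type u} {A : Set α} {n : ℕ} (h : #A = n) : A.Finite :=
  lt_aleph0_iff_set_finite.1 (h ▸ natCast_lt_aleph0)

end Cardinal

namespace Ordinal

noncomputable def sparseSeq (X : Set Ordinal.{u}) (f : Ordinal.{u} → Ordinal.{u})
    (α : Ordinal.{u}) : Ordinal.{u} :=
  sInf {y ∈ X | ∀ β < α, sparseSeq X f β < y ∧ f (sparseSeq X f β) < y}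
termination_by α

section SparseSeq

variable {κ : Cardinal.{u}} {X : Set Ordinal.{u}} {f : Ordinal.{u} → Ordinal.{u}}

theorem sparseSeq_spec (hκ : κ.IsRegular) (hX : X ⊆ Iio κ.ord)
    (hunb : ∀ o < κ.ord, ∃ x ∈ X, o < x) (hf : ∀ ξ < κ.ord, f ξ < κ.ord) {α : Ordinal.{u}}
    (hα : α < κ.ord) : sparseSeq X f α ∈ X ∧
      ∀ β < α, sparseSeq X f β < sparseSeq X f α ∧ f (sparseSeq X f β) < sparseSeq X f α := by
  induction α using WellFoundedLT.induction with
  | _ α ih =>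
  set earlier := (fun β => max (sparseSeq X f β) (f (sparseSeq X f β))) '' Iio α
  have hearlier : earlier ⊆ Iio κ.ord := by
    rintro _ ⟨β, hβ, rfl⟩
    have hβX := (ih β hβ (lt_trans hβ hα)).1
    exact max_lt (hX hβX) (hf _ (hX hβX))
  have hcard : #earlier < Cardinal.lift.{u + 1} κ := by
    refine mk_image_le.trans_lt ?_
    rwa [Cardinal.mk_Iio_ordinal, Cardinal.lift_lt, ← lt_ord]
  obtain ⟨y, hyX, hy⟩ := hunb _ (Cardinal.sSup_lt_ord_of_isRegular hκ hearlier hcard)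
  have hne : {y ∈ X | ∀ β < α, sparseSeq X f β < y ∧ f (sparseSeq X f β) < y}.Nonempty := by
    refine ⟨y, hyX, fun β hβ => ?_⟩
    have hle : max (sparseSeq X f β) (f (sparseSeq X f β)) ≤ sSup earlier :=
      le_csSup ⟨κ.ord, fun _ h => (hearlier h).le⟩ ⟨β, hβ, rfl⟩
    exact max_lt_iff.1 (hle.trans_lt hy)
  rw [sparseSeq]
  exact csInf_mem hne

theorem exists_sparse_subset (hκ : κ.IsRegular) (hX : X ⊆ Iio κ.ord)
    (hunb : ∀ o < κ.ord, ∃ x ∈ X, o < x) (hf : ∀ ξ < κ.ord, f ξ < κ.ord) :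
    ∃ Y ⊆ X, #Y = Cardinal.lift.{u + 1} κ ∧ ∀ y ∈ Y, ∀ z ∈ Y, y < z → f y < z := by
  have spec := fun α (hα : α < κ.ord) => sparseSeq_spec hκ hX hunb hf hα
  have hmono : StrictMonoOn (sparseSeq X f) (Iio κ.ord) :=
    fun β _ α hα hβα => ((spec α hα).2 β hβα).1
  refine ⟨sparseSeq X f '' Iio κ.ord, ?_, ?_, ?_⟩
  · rintro _ ⟨α, hα, rfl⟩
    exact (spec α hα).1
  · rw [mk_image_eq_of_injOn _ _ hmono.injOn, Cardinal.mk_Iio_ordinal, card_ord]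
  · rintro _ ⟨β, hβ, rfl⟩ _ ⟨α, hα, rfl⟩ hlt
    exact ((spec α hα).2 β ((hmono.lt_iff_lt hβ hα).1 hlt)).2

end SparseSeq

end Ordinal

theorem exists_bound_of_isRegular {κ : Cardinal.{u}} (hκ : κ.IsRegular)
    {𝒜 : Set (Set Ordinal.{u})} (hfin : ∀ A ∈ 𝒜, A.Finite)
    {B : Set Ordinal.{u} → Set Ordinal.{u}}
    (hB : ∀ A ∈ 𝒜, B A ⊆ Iio κ.ord ∧ #(B A) < lift.{u + 1} κ) :
    ∃ g : Ordinal.{u} → Ordinal.{u}, (∀ ξ < κ.ord, g ξ < κ.ord) ∧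
      ∀ A ∈ 𝒜, ∀ ξ, A ⊆ Iic ξ → ∀ b ∈ B A, b ≤ g ξ := by
  have hsub : ∀ ξ, (⋃ A ∈ {A ∈ 𝒜 | A ⊆ Iic ξ}, B A) ⊆ Iio κ.ord := fun ξ =>
    iUnion₂_subset fun A hA => (hB A hA.1).1
  refine ⟨fun ξ => sSup (⋃ A ∈ {A ∈ 𝒜 | A ⊆ Iic ξ}, B A), fun ξ hξ => ?_,
    fun A hA ξ hAξ b hb => le_csSup ⟨κ.ord, fun _ h => (hsub ξ h).le⟩
      (mem_biUnion (x := A) ⟨hA, hAξ⟩ hb)⟩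
  have hfinite : {A ∈ 𝒜 | A ⊆ Iic ξ} ⊆ {A | A ⊆ Iic ξ ∧ A.Finite} :=
    fun A hA => ⟨hA.2, hfin A hA.1⟩
  have hcount : #{A ∈ 𝒜 | A ⊆ Iic ξ} < lift.{u + 1} κ :=
    (mk_le_mk_of_subset hfinite).trans_lt <|
      mk_finite_subsets_lt (by simpa using hκ.aleph0_le) (mk_Iic_lt_of_lt_ord hκ.aleph0_le hξ)
  refine Cardinal.sSup_lt_ord_of_isRegular hκ (hsub ξ) ?_
  exact (card_biUnion_lt_iff_forall_of_isRegular hκ.lift hcount).2 fun A hA => (hB A hA.1).2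

theorem fast_of_sparse {n : ℕ} {Y : Set Ordinal.{0}} {B : Set Ordinal.{0} → Set Ordinal.{0}}
    {g : Ordinal.{0} → Ordinal.{0}} (hdisj : ∀ A ⊆ Y, #A = n → Disjoint A (B A))
    (hbound : ∀ A ⊆ Y, #A = n → ∀ ξ, A ⊆ Iic ξ → ∀ b ∈ B A, b ≤ g ξ)
    (hpos : ∀ y ∈ Y, g 0 < y) (hsparse : ∀ y ∈ Y, ∀ z ∈ Y, y < z → g y < z) :
    Fast n Y B := by
  intro A hAY hAn b ⟨hbB, hbY⟩
  rcases A.eq_empty_or_nonempty with rfl | hne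
  · exact absurd (hbound ∅ hAY hAn 0 (empty_subset _) b hbB) (hpos b hbY).not_ge
  have hfin : A.Finite := finite_of_mk_eq_natCast hAn
  have hmax : sSup A ∈ A := hne.csSup_mem hfin
  have hAmax : A ⊆ Iic (sSup A) := fun a ha => le_csSup hfin.bddAbove ha
  rcases lt_trichotomy b (sSup A) with hlt | rfl | hgt
  · exact hlt
  · exact absurd hbB (disjoint_left.1 (hdisj A hAY hAn) hmax)
  · exact absurd (hbound A hAY hAn _ hAmax b hbB) (hsparse _ (hAY hmax) b hbY hgt).not_ge

/-- Let `κ` be an infinite regular cardinal, `X ∈ [κ]^κ`, and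
`𝒬` a set of `([κ]^n, [κ]^{<κ})`-patterns such that each `A ∈ [X]^n` has an
associated `B A` with `(A, B A) ∈ 𝒬`.  Then some `X' ∈ [X]^κ` is fast for
`A ↦ B A`. -/
theorem statement6 (κ : Cardinal.{0}) (hκ : κ.IsRegular)
    (X : Set Ordinal.{0}) (hX : X ∈ bigSets κ) (n : ℕ)
    (Q : Set (Set Ordinal.{0} × Set Ordinal.{0}))
    (hQ : ∀ p ∈ Q, p.1 ∈ nSets κ n ∧ p.2 ∈ smallSets κ κ ∧ Disjoint p.1 p.2)
    (B : Set Ordinal.{0} → Set Ordinal.{0})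
    (hB : ∀ A, A ⊆ X → #A = n → (A, B A) ∈ Q) :
    ∃ X' ∈ subBig κ X, Fast n X' B := by
  obtain ⟨hXκ, hXcard⟩ := hX
  have hpattern : ∀ A ⊆ X, #A = n → B A ∈ smallSets κ κ ∧ Disjoint A (B A) :=
    fun A hAX hAn => (hQ _ (hB A hAX hAn)).2
  obtain ⟨g, hgκ, hg⟩ := exists_bound_of_isRegular hκ (𝒜 := {A | A ⊆ X ∧ #A = n})
    (fun A hA => finite_of_mk_eq_natCast hA.2)
    (fun A hA => (hpattern A hA.1 hA.2).1)
  have hunb : ∀ o < κ.ord, ∃ x ∈ X ∩ Ioi (g 0), o < x := fun o ho => by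
    obtain ⟨x, hxX, hx⟩ := exists_lt_of_mk_eq hκ.aleph0_le hXcard (max_lt ho (hgκ 0 hκ.ord_pos))
    exact ⟨x, ⟨hxX, (le_max_right _ _).trans_lt hx⟩, (le_max_left _ _).trans_lt hx⟩
  obtain ⟨Y, hY, hYcard, hYsparse⟩ :=
    Ordinal.exists_sparse_subset hκ (inter_subset_left.trans hXκ) hunb hgκ
  have hYX : Y ⊆ X := hY.trans inter_subset_left
  exact ⟨Y, ⟨hYX, hYcard⟩, fast_of_sparse
    (fun A hAY hAn => (hpattern A (hAY.trans hYX) hAn).2)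
    (fun A hAY hAn => hg A ⟨hAY.trans hYX, hAn⟩)
    (fun y hy => (hY hy).2) hYsparse⟩
end

section
/- Let κ be an uncountable cardinal satisfying the partition property κ → (κ)²₂, i.e., for every coloring c : [κ]^2 → 2 there is H ⊆ κ of cardinality κ with c constant on [H]^2 (this holds in particular when κ is weakly compact). Then every set in Σ([κ]^2, [κ]^{<κ}) is Ramsey. -/
/-!
The partition property forces `κ` to be regular: a singular `κ` is the union of fewer than `κ`
bounded blocks, and colouring a pair by whether it lies inside one block admits no homogeneous
set of size `κ`.

Write `S` as the union of the `[A;B]` with `(A,B) ∈ Q`, colour a pair `A` by whether some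
`(A,B)` lies in `Q`, and take a homogeneous `H`. If no pair of `H` carries a pattern, then no
subset of `H` lies in `S`. Otherwise choose such a `B_A` for every pair `A`. By Zorn's lemma and
regularity, `H` thins out to a set `X` of size `κ` in which no element lies in `B_{a,b}` for
two smaller elements `a < b` of `X`. Every `Y ∈ [X]^κ` then matches the pattern of its two least
elements.
-/

open Set Cardinal

universe u

def PairPartitionProperty (κ : Cardinal.{0}) : Prop :=
  ∀ c : Set Ordinal.{0} → Fin 2, ∃ H, H ⊆ Set.Iio κ.ord ∧ #H = Cardinal.lift.{1} κ ∧
    ∀ A₁ ∈ nSets κ 2, ∀ A₂ ∈ nSets κ 2, A₁ ⊆ H → A₂ ⊆ H → c A₁ = c A₂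

lemma pair_mem_nSets {κ : Cardinal.{0}} {a b : Ordinal.{0}} (ha : a < κ.ord) (hb : b < κ.ord)
    (hab : a ≠ b) : ({a, b} : Set Ordinal.{0}) ∈ nSets κ 2 := by
  refine ⟨pair_subset ha hb, ?_⟩
  rw [mk_insert (by simpa using hab), mk_singleton]
  norm_num

lemma nontrivial_of_mk_eq_lift {κ : Cardinal.{u}} (hκ : ℵ₀ ≤ κ) {α : Type (u + 1)}
    {s : Set α} (hs : #s = lift.{u + 1} κ) : s.Nontrivial :=
  (infinite_coe_iff.1 (infinite_iff.2 (hs ▸ aleph0_le_lift.2 hκ))).nontrivial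

lemma mk_Iic_lt_lift {κ : Cardinal.{u}} (hκ : ℵ₀ ≤ κ) {β : Ordinal.{u}} (hβ : β < κ.ord) :
    #(Iic β) < lift.{u + 1} κ := by
  rw [← Order.Iio_succ, mk_Iio_ordinal, lift_lt]
  exact lt_ord.1 ((isSuccLimit_ord hκ).succ_lt hβ)

lemma PairPartitionProperty.exists_homogeneous {κ : Cardinal.{0}} (h : PairPartitionProperty κ)
    (hκ : ℵ₀ ≤ κ) (P : Set Ordinal.{0} → Prop) :
    ∃ H ⊆ Iio κ.ord, #H = lift.{1} κ ∧
      ((∀ A ∈ nSets κ 2, A ⊆ H → P A) ∨ (∀ A ∈ nSets κ 2, A ⊆ H → ¬ P A)) := by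
  classical
  obtain ⟨H, hHκ, hHcard, hom⟩ := h fun A => if P A then 1 else 0
  obtain ⟨a, ha, b, hb, hab⟩ := nontrivial_of_mk_eq_lift hκ hHcard
  have hom' : ∀ A ∈ nSets κ 2, A ⊆ H → (P A ↔ P {a, b}) := fun A hA hAH => by
    have hc := hom A hA _ (pair_mem_nSets (hHκ ha) (hHκ hb) hab) hAH (pair_subset ha hb)
    split_ifs at hc <;> simp_all
  refine ⟨H, hHκ, hHcard, ?_⟩
  by_cases hP : P {a, b}
  · exact Or.inl fun A hA hAH => (hom' A hA hAH).2 hP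
  · exact Or.inr fun A hA hAH => mt (hom' A hA hAH).1 hP

theorem PairPartitionProperty.isRegular {κ : Cardinal.{0}} (h : PairPartitionProperty κ)
    (hκ : ℵ₀ ≤ κ) : κ.IsRegular := by
  refine ⟨hκ, not_lt.1 fun hcof => ?_⟩
  obtain ⟨s, hs, hscard⟩ := Order.exists_cof_eq (Iio κ.ord)
  set S : Set Ordinal.{0} := Subtype.val '' s
  have hS : #S < lift.{1} κ := by
    rw [mk_image_eq Subtype.val_injective, hscard, Ordinal.cof_Iio, ← Ordinal.lift_cof]
    exact lift_lt.2 hcof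
  set blk : Ordinal.{0} → Ordinal.{0} := fun α => sInf {β ∈ S | α ≤ β}
  have hblk : ∀ α < κ.ord, blk α ∈ S ∧ α ≤ blk α := fun α hα => by
    obtain ⟨β, hβ, hαβ⟩ := hs ⟨α, hα⟩
    exact csInf_mem (s := {β ∈ S | α ≤ β}) ⟨β, mem_image_of_mem _ hβ, hαβ⟩
  obtain ⟨H, hHκ, hHcard, hsame | hdiff⟩ :=
    h.exists_homogeneous hκ fun A => (blk '' A).Subsingleton
  · obtain ⟨a, ha⟩ := (nontrivial_of_mk_eq_lift hκ hHcard).nonempty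
    have hHa : H ⊆ Iic (blk a) := fun b hb => by
      obtain rfl | hab := eq_or_ne a b
      · exact (hblk a (hHκ ha)).2
      · have hsub := hsame _ (pair_mem_nSets (hHκ ha) (hHκ hb) hab) (pair_subset ha hb)
        rw [image_pair] at hsub
        exact hsub (mem_insert _ _) (mem_insert_of_mem _ rfl) ▸ (hblk b (hHκ hb)).2
    obtain ⟨β, hβ, hβa⟩ := (hblk a (hHκ ha)).1
    refine (mk_le_mk_of_subset hHa).not_gt (hHcard ▸ mk_Iic_lt_lift hκ ?_)
    exact hβa ▸ β.2
  · have hinj : InjOn blk H := fun a ha b hb hab => by_contra fun hne =>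
      hdiff _ (pair_mem_nSets (hHκ ha) (hHκ hb) hne) (pair_subset ha hb)
        (by rw [image_pair, hab, pair_eq_singleton]; exact subsingleton_singleton)
    have hHS : #H ≤ #S := by
      rw [← mk_image_eq_of_injOn _ _ hinj]
      exact mk_le_mk_of_subset (image_subset_iff.2 fun α hα => (hblk α (hHκ hα)).1)
    exact hHS.not_gt (hHcard ▸ hS)

def EndFree {α : Type*} [LT α] (F : Set α → Set α) (X : Set α) : Prop :=
  ∀ a ∈ X, ∀ b ∈ X, ∀ c ∈ X, a < b → b < c → c ∉ F {a, b}

section EndFree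

variable {α : Type*} {F : Set α → Set α}

theorem IsChain.endFree_sUnion [LT α] {C : Set (Set α)} (hC : IsChain (· ⊆ ·) C)
    (hF : ∀ X ∈ C, EndFree F X) : EndFree F (⋃₀ C) := by
  rintro a ⟨Xa, hXa, ha⟩ b ⟨Xb, hXb, hb⟩ c ⟨Xc, hXc, hc⟩
  obtain ⟨Y, hY, hXaY, hXbY⟩ := hC.directedOn Xa hXa Xb hXb
  obtain ⟨Z, hZ, hYZ, hXcZ⟩ := hC.directedOn Y hY Xc hXc
  exact hF Z hZ a (hYZ (hXaY ha)) b (hYZ (hXbY hb)) c (hXcZ hc)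

theorem EndFree.insert [LinearOrder α] {X : Set α} {c : α} (hX : EndFree F X)
    (hc : ∀ a ∈ X, a < c) (hcF : ∀ a ∈ X, ∀ b ∈ X, c ∉ F {a, b}) :
    EndFree F (insert c X) := by
  rintro a (rfl | ha) b (rfl | hb) d (rfl | hd) hab hbd
  · exact (lt_irrefl _ hab).elim
  · exact (lt_irrefl _ hab).elim
  · exact ((hc b hb).trans hab |>.false).elim
  · exact ((hc b hb).trans hab |>.false).elim
  · exact (lt_irrefl _ hbd).elim
  · exact ((hc d hd).trans hbd |>.false).elim
  · exact hcF a ha b hb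
  · exact hX a ha b hb d hd hab hbd

theorem EndFree.exists_pair_inter_subset [LinearOrder α] [WellFoundedLT α] {X Y : Set α}
    (hX : EndFree F X) (hYX : Y ⊆ X) (hY : Y.Nontrivial) :
    ∃ a ∈ Y, ∃ b ∈ Y, a < b ∧ F {a, b} ∩ Y ⊆ {a, b} := by
  set a := wellFounded_lt.min Y hY.nonempty
  have ha : a ∈ Y := wellFounded_lt.min_mem Y hY.nonempty
  have hY' : (Y \ {a}).Nonempty := hY.exists_ne a |>.imp fun _ h => ⟨h.1, h.2⟩
  set b := wellFounded_lt.min (Y \ {a}) hY'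
  have hb : b ∈ Y \ {a} := wellFounded_lt.min_mem _ hY'
  have hab : a < b := (wellFounded_lt.min_le hb.1).lt_of_ne (Ne.symm hb.2)
  refine ⟨a, ha, b, hb.1, hab, fun c ⟨hcF, hcY⟩ => by_contra fun hc => ?_⟩
  simp only [mem_insert_iff, mem_singleton_iff, not_or] at hc
  have hbc : b < c :=
    (wellFounded_lt.min_le (s := Y \ {a}) ⟨hcY, hc.1⟩).lt_of_ne (Ne.symm hc.2)
  exact hX a (hYX ha) b (hYX hb.1) c (hYX hcY) hab hbc hcF

end EndFree

theorem exists_endFree_subset {κ : Cardinal.{u}} (hκ : κ.IsRegular) {H : Set Ordinal.{u}}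
    (hH : H ⊆ Iio κ.ord) (hHcard : #H = lift.{u + 1} κ) {F : Set Ordinal.{u} → Set Ordinal.{u}}
    (hF : ∀ A, #(F A) < lift.{u + 1} κ) : ∃ X ⊆ H, #X = lift.{u + 1} κ ∧ EndFree F X := by
  obtain ⟨X, hX⟩ := zorn_subset {X | X ⊆ H ∧ EndFree F X} fun C hCS hC =>
    ⟨⋃₀ C, ⟨sUnion_subset fun _ hX => (hCS hX).1, hC.endFree_sUnion fun _ hX => (hCS hX).2⟩,
      fun _ => subset_sUnion_of_mem⟩
  refine ⟨X, hX.prop.1, ((mk_le_mk_of_subset hX.prop.1).trans_eq hHcard).antisymm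
    (not_lt.1 fun hlt => ?_), hX.prop.2⟩
  -- a maximal end-free `X` of size `< κ` could be extended by any `c ∈ H` outside `D`
  set D := (⋃ a ∈ X, Iic a) ∪ ⋃ a ∈ X, ⋃ b ∈ X, F {a, b}
  have hreg := hκ.lift.{u + 1}
  have hD : #D < lift.{u + 1} κ := by
    refine (mk_union_le _ _).trans_lt (add_lt_of_lt hreg.aleph0_le ?_ ?_)
    · exact (card_biUnion_lt_iff_forall_of_isRegular hreg hlt).2 fun a ha =>
        mk_Iic_lt_lift hκ.aleph0_le (hH (hX.prop.1 ha))
    · exact (card_biUnion_lt_iff_forall_of_isRegular hreg hlt).2 fun a _ =>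
        (card_biUnion_lt_iff_forall_of_isRegular hreg hlt).2 fun b _ => hF _
  obtain ⟨c, hcH, hcD⟩ : (H \ D).Nonempty :=
    sdiff_nonempty.2 fun hHD => (mk_le_mk_of_subset hHD).not_gt (hHcard ▸ hD)
  have hcX : c ∈ X := hX.mem_of_prop_insert ⟨insert_subset hcH hX.prop.1, hX.prop.2.insert
    (fun a ha => not_le.1 fun hca => hcD (Or.inl (mem_biUnion ha hca)))
    (fun a ha b hb hcF => hcD (Or.inr (mem_biUnion ha (mem_biUnion hb hcF))))⟩
  exact hcD (Or.inl (mem_biUnion hcX self_mem_Iic))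

/-- Let `κ` be an uncountable cardinal with the partition
property `κ → (κ)²₂`.  Then every set in `Σ([κ]^2, [κ]^{<κ})` is Ramsey. -/
theorem statement7 (κ : Cardinal.{0}) (hκ : ℵ₀ < κ)
    (hpart : ∀ c : Set Ordinal.{0} → Fin 2,
      ∃ H, H ⊆ Set.Iio κ.ord ∧ #H = Cardinal.lift.{1} κ ∧
        ∀ A₁ ∈ nSets κ 2, ∀ A₂ ∈ nSets κ 2, A₁ ⊆ H → A₂ ⊆ H → c A₁ = c A₂) :
    ∀ S ∈ SigmaFam κ (nSets κ 2) (smallSets κ κ), IsRamsey κ S := by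
  classical
  rintro _ ⟨Q, hQ, rfl⟩
  obtain ⟨H, hHκ, hHcard, hall | hnone⟩ :=
    PairPartitionProperty.exists_homogeneous hpart hκ.le fun A => ∃ B, (A, B) ∈ Q
  · let F A := if h : ∃ B, (A, B) ∈ Q then h.choose else ∅
    have hFQ : ∀ A, (∃ B, (A, B) ∈ Q) → (A, F A) ∈ Q := fun A h => by
      simpa only [F, dif_pos h] using h.choose_spec
    have hF : ∀ A, #(F A) < lift.{1} κ := fun A => by
      by_cases h : ∃ B, (A, B) ∈ Q
      · exact (hQ _ (hFQ A h)).2.1.2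
      · simpa [F, h] using aleph0_pos.trans hκ
    obtain ⟨X, hXH, hXcard, hX⟩ :=
      exists_endFree_subset (PairPartitionProperty.isRegular hpart hκ.le) hHκ hHcard hF
    refine ⟨X, ⟨hXH.trans hHκ, hXcard⟩, Or.inl fun Y ⟨hYX, hYcard⟩ => ?_⟩
    have hYH : Y ⊆ H := hYX.trans hXH
    obtain ⟨a, ha, b, hb, hab, hFab⟩ :=
      hX.exists_pair_inter_subset hYX (nontrivial_of_mk_eq_lift hκ.le hYcard)
    have habQ := hFQ _ <| hall _ (pair_mem_nSets (hHκ (hYH ha)) (hHκ (hYH hb)) hab.ne)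
      (pair_subset (hYH ha) (hYH hb))
    refine ⟨⟨hYH.trans hHκ, hYcard⟩, _, habQ, pair_subset ha hb, ?_⟩
    exact subset_empty_iff.1 fun c hc => (hQ _ habQ).2.2.notMem_of_mem_left (hFab hc) hc.1
  · refine ⟨H, ⟨hHκ, hHcard⟩, Or.inr (eq_empty_of_forall_notMem ?_)⟩
    rintro Y ⟨⟨hYH, -⟩, -, p, hp, hpY, -⟩
    exact hnone p.1 (hQ p hp).1 (hpY.trans hYH) ⟨p.2, hp⟩
end

section
/- Let κ be an uncountable cardinal such that for every n ∈ ω, every cardinal μ < κ, and every coloring d : [κ]^n → μ, there is H ⊆ κ of cardinality κ with d constant on [H]^n (this holds when κ is weakly compact). Let 1 ≤ λ < κ be a cardinal, let n ∈ ω, and let c : [κ]^κ → λ+1 be a function such that for each α < λ, the preimage c⁻¹(α) is in Σ([κ]^n, [κ]^{<κ}) (no requirement is placed on c⁻¹(λ)). Then c is Ramsey, i.e., there is H ∈ [κ]^κ such that c is constant on [H]^κ. -/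
open Set Cardinal

universe u

/-!
Colour each `A ∈ [κ]^n` by some `α < λ` such that `A` is the first component of a pattern in
`c⁻¹(α)`, or by `none` if there is no such `α`. There are fewer than `κ` colours, so some
`H₁ ∈ [κ]^κ` is homogeneous. If its colour is `none`, no `X ∈ [H₁]^κ` matches a pattern of any
`c⁻¹(α)` with `α < λ`, so `c = λ` on `[H₁]^κ`. If its colour is `α₀`, every `A ∈ [H₁]^n` has a
pattern `(A, B_A)` in `c⁻¹(α₀)` with `|B_A| < κ`. The partition property for `n = 1` makes `κ`
regular, so Zorn's lemma yields `H ⊆ H₁` of size `κ` that is free: no `x ∈ H` lies in `B_A` for a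
finite `A ⊆ H` below `x`. Every `X ∈ [H]^κ` then matches `(A, B_A)` with `A` the first `n`
elements of `X`, so `c = α₀` on `[H]^κ`.
-/

/-- `κ → (κ)^n_μ` for all `n < ω` and `μ < κ`. -/
def PartitionProperty (κ : Cardinal.{0}) : Prop :=
  ∀ (n : ℕ) (μ : Cardinal.{0}), μ < κ →
    ∀ d : Set Ordinal.{0} → Ordinal.{0},
      (∀ A ∈ nSets κ n, d A < μ.ord) →
      ∃ H, H ⊆ Set.Iio κ.ord ∧ #H = Cardinal.lift.{1} κ ∧
        ∀ A₁ ∈ nSets κ n, ∀ A₂ ∈ nSets κ n, A₁ ⊆ H → A₂ ⊆ H → d A₁ = d A₂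

namespace PartitionProperty

variable {κ : Cardinal.{0}}

theorem exists_homogeneous (h : PartitionProperty κ) (n : ℕ) {ι : Type 1}
    (hι : #ι < Cardinal.lift.{1} κ) (d : Set Ordinal.{0} → ι) :
    ∃ H, H ⊆ Set.Iio κ.ord ∧ #H = Cardinal.lift.{1} κ ∧
      ∀ A₁ ∈ nSets κ n, ∀ A₂ ∈ nSets κ n, A₁ ⊆ H → A₂ ⊆ H → d A₁ = d A₂ := by
  obtain ⟨μ, hμ, hμι⟩ := Cardinal.lt_lift_iff.1 hι
  have : #ι = #(Iio μ.ord) := by rw [mk_Iio_ordinal, card_ord, hμι]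
  obtain ⟨e⟩ := Cardinal.eq.1 this
  obtain ⟨H, hHκ, hH, hom⟩ := h n μ hμ (fun A ↦ e (d A)) fun A _ ↦ (e (d A)).2
  exact ⟨H, hHκ, hH, fun A₁ h₁ A₂ h₂ hA₁ hA₂ ↦ e.injective (Subtype.ext (hom A₁ h₁ A₂ h₂ hA₁ hA₂))⟩

/-- A cofinal set `s` of size `cof κ < κ` colours each `x < κ` by an element of `s` above it;
a homogeneous set is then bounded below `κ`. -/
theorem isRegular (h : PartitionProperty κ) (hκ : ℵ₀ < κ) : κ.IsRegular := by
  refine ⟨hκ.le, not_lt.1 fun hcof ↦ ?_⟩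
  obtain ⟨s, hs, hscard⟩ := Order.exists_cof_eq (Iio κ.ord)
  have hs_lt : #s < Cardinal.lift.{1} κ := by
    rwa [hscard, Ordinal.cof_Iio, ← Ordinal.lift_cof, Cardinal.lift_lt]
  have hbound : ∀ x : Ordinal.{0}, ∃ b : s, x < κ.ord → x ≤ b.1.1 := by
    intro x
    by_cases hx : x < κ.ord
    · obtain ⟨b, hb, hxb⟩ := hs ⟨x, hx⟩
      exact ⟨⟨b, hb⟩, fun _ ↦ hxb⟩
    · obtain ⟨b, hb, -⟩ := hs ⟨0, Cardinal.ord_pos.2 (aleph0_pos.trans hκ)⟩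
      exact ⟨⟨b, hb⟩, fun h ↦ absurd h hx⟩
  choose g hg using hbound
  obtain ⟨H, hHκ, hH, hom⟩ := h.exists_homogeneous 1 hs_lt fun A ↦ g (sInf A)
  have hsingle : ∀ x ∈ H, ({x} : Set Ordinal.{0}) ∈ nSets κ 1 := fun x hx ↦
    ⟨singleton_subset_iff.2 (hHκ hx), by simp⟩
  obtain ⟨x₀, hx₀⟩ : H.Nonempty := by
    rw [← Set.nonempty_coe_sort, ← Cardinal.mk_ne_zero_iff, hH]
    simpa using (aleph0_pos.trans hκ).ne'
  set b := (g x₀).1.1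
  have hHb : H ⊆ Iio (Order.succ b) := fun x hx ↦ by
    have hgx : g x = g x₀ := by
      simpa using hom _ (hsingle x hx) _ (hsingle x₀ hx₀) (by simpa using hx) (by simpa using hx₀)
    exact Order.lt_succ_iff.2 (hgx ▸ hg x (hHκ hx))
  have hb : Order.succ b < κ.ord := (isSuccLimit_ord hκ.le).succ_lt (g x₀).1.2
  have := hH ▸ mk_le_mk_of_subset hHb
  rw [mk_Iio_ordinal, Cardinal.lift_le] at this
  exact (Cardinal.lt_ord.1 hb).not_ge this

end PartitionProperty

theorem Set.Infinite.exists_initial_finset {α : Type*} [LinearOrder α] [WellFoundedLT α]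
    {X : Set α} (hX : X.Infinite) (n : ℕ) :
    ∃ A : Finset α, ↑A ⊆ X ∧ A.card = n ∧ ∀ x ∈ X, ∀ a ∈ A, x ≤ a → x ∈ A := by
  induction n with
  | zero => exact ⟨∅, by simp, rfl, by simp⟩
  | succ n ih =>
    obtain ⟨A, hAX, hA, hinit⟩ := ih
    obtain ⟨y, ⟨hyX, hyA⟩, hmin⟩ := wellFounded_lt.has_min _ (hX.sdiff A.finite_toSet).nonempty
    refine ⟨insert y A, ?_, by rw [Finset.card_insert_of_notMem hyA, hA], ?_⟩
    · simpa [Set.insert_subset_iff] using ⟨hyX, hAX⟩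
    · intro x hx a ha hxa
      by_cases hxA : x ∈ A
      · exact Finset.mem_insert_of_mem hxA
      have hyx : y ≤ x := not_lt.1 (hmin x ⟨hx, hxA⟩)
      rcases Finset.mem_insert.1 ha with rfl | ha
      · simp [le_antisymm hxa hyx]
      · exact Finset.mem_insert_of_mem (hinit x hx a ha hxa)

section FreeSet

variable {α : Type*} [Preorder α]

def IsFreeSet (B : Finset α → Set α) (H : Set α) : Prop :=
  ∀ A : Finset α, ↑A ⊆ H → ∀ x ∈ H, (∀ a ∈ A, a < x) → x ∉ B A

variable {B : Finset α → Set α} {H : Set α}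

theorem isFreeSet_empty : IsFreeSet B ∅ := fun _ _ _ hx ↦ hx.elim

theorem isFreeSet_sUnion {c : Set (Set α)} (hc : IsChain (· ⊆ ·) c)
    (hfree : ∀ H ∈ c, IsFreeSet B H) : IsFreeSet B (⋃₀ c) := by
  intro A hA x hx hlt
  obtain ⟨H₀, hH₀c, -⟩ := mem_sUnion.1 hx
  obtain ⟨H, hHc, hxAH⟩ := hc.directedOn.exists_mem_subset_of_finite_of_subset_sUnion
    ⟨H₀, hH₀c⟩ (A.finite_toSet.insert x) (insert_subset hx hA)
  exact hfree H hHc A ((subset_insert _ _).trans hxAH) x (hxAH (mem_insert _ _)) hlt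

theorem IsFreeSet.insert_of_forall_lt (hH : IsFreeSet B H) {y : α} (hyH : ∀ h ∈ H, h < y)
    (hyB : ∀ A : Finset α, ↑A ⊆ H → y ∉ B A) : IsFreeSet B (insert y H) := by
  have hsub : ∀ A : Finset α, ↑A ⊆ insert y H → (∀ a ∈ A, a < y) → ↑A ⊆ H :=
    fun A hA hlt a ha ↦ (hA ha).resolve_left fun hay ↦ (hlt a ha).ne hay
  intro A hA x hx hlt
  rcases hx with rfl | hx
  · exact hyB A (hsub A hA hlt)
  · exact hH A (hsub A hA fun a ha ↦ (hlt a ha).trans (hyH x hx)) x hx hlt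

end FreeSet

theorem IsFreeSet.matches {B : Finset Ordinal.{0} → Set Ordinal.{0}} {H X : Set Ordinal.{0}}
    (hH : IsFreeSet B H) (hXH : X ⊆ H) {A : Finset Ordinal.{0}} (hAX : ↑A ⊆ X)
    (hinit : ∀ x ∈ X, ∀ a ∈ A, x ≤ a → x ∈ A) (hdisj : Disjoint (↑A : Set Ordinal.{0}) (B A)) :
    Matches X A (B A) := by
  refine ⟨hAX, eq_empty_of_forall_notMem fun x ⟨hxB, hxX⟩ ↦ ?_⟩
  by_cases hlt : ∀ a ∈ A, a < x
  · exact hH A (hAX.trans hXH) x (hXH hxX) hlt hxB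
  · simp only [not_forall, not_lt] at hlt
    obtain ⟨a, ha, hxa⟩ := hlt
    exact disjoint_left.1 hdisj (hinit x hxX a ha hxa) hxB

theorem Cardinal.mk_finset_lt {α : Type u} {θ : Cardinal.{u}} (hθ : ℵ₀ ≤ θ) (hα : #α < θ) :
    #(Finset α) < θ := by
  cases finite_or_infinite α
  · exact (lt_aleph0_of_finite _).trans_le hθ
  · rwa [mk_finset_of_infinite]

section FreeSubset

variable {κ : Cardinal.{0}} {B : Finset Ordinal.{0} → Set Ordinal.{0}} {H₁ : Set Ordinal.{0}}

theorem exists_mem_forall_lt_notMem (hκ : κ.IsRegular) (hH₁ : #H₁ = Cardinal.lift.{1} κ)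
    (hB : ∀ A, #(B A) < Cardinal.lift.{1} κ) {H : Set Ordinal.{0}} (hHκ : H ⊆ Iio κ.ord)
    (hH : #H < Cardinal.lift.{1} κ) :
    ∃ y ∈ H₁, (∀ h ∈ H, h < y) ∧ ∀ A : Finset Ordinal.{0}, ↑A ⊆ H → y ∉ B A := by
  classical
  have hκ' := hκ.lift.{1}
  have hsup : sSup H < κ.ord := Ordinal.sSup_lt_of_lt_cof
    (by rwa [← Ordinal.lift_cof, hκ.cof_ord]) hHκ
  set F := Iio (Order.succ (sSup H)) ∪ ⋃ s : Finset H, B (s.map (Function.Embedding.subtype _))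
  have hF : #F < Cardinal.lift.{1} κ := by
    refine (mk_union_le _ _).trans_lt (add_lt_of_lt hκ'.aleph0_le ?_ ?_)
    · rw [mk_Iio_ordinal, Cardinal.lift_lt, ← Cardinal.lt_ord]
      exact (isSuccLimit_ord hκ.aleph0_le).succ_lt hsup
    · exact (card_iUnion_lt_iff_forall_of_isRegular hκ' (mk_finset_lt hκ'.aleph0_le hH)).2
        fun _ ↦ hB _
  obtain ⟨y, hyH₁, hyF⟩ : (H₁ \ F).Nonempty :=
    sdiff_nonempty.2 fun h ↦ (hH₁ ▸ mk_le_mk_of_subset h).not_gt hF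
  refine ⟨y, hyH₁, fun h hh ↦ ?_, fun A hA hyA ↦ hyF (Or.inr ?_)⟩
  · have hy : sSup H < y := by simpa [F, Order.lt_succ_iff] using fun h ↦ hyF (Or.inl h)
    exact (le_csSup (bddAbove_Iio.mono hHκ) hh).trans_lt hy
  · refine mem_iUnion.2 ⟨A.subtype (· ∈ H), ?_⟩
    rwa [Finset.subtype_map_of_mem hA]

theorem exists_isFreeSet_subset (hκ : κ.IsRegular) (hH₁κ : H₁ ⊆ Iio κ.ord)
    (hH₁ : #H₁ = Cardinal.lift.{1} κ) (hB : ∀ A, #(B A) < Cardinal.lift.{1} κ) :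
    ∃ H ⊆ H₁, #H = Cardinal.lift.{1} κ ∧ IsFreeSet B H := by
  obtain ⟨H, -, hmax⟩ := zorn_subset_nonempty {H | H ⊆ H₁ ∧ IsFreeSet B H}
    (fun c hc hchain _ ↦ ⟨⋃₀ c, ⟨sUnion_subset fun H hH ↦ (hc hH).1,
      isFreeSet_sUnion hchain fun H hH ↦ (hc hH).2⟩, fun _ ↦ subset_sUnion_of_mem⟩)
    ∅ ⟨empty_subset _, isFreeSet_empty⟩
  obtain ⟨hHH₁, hfree⟩ := hmax.prop
  refine ⟨H, hHH₁, (hH₁ ▸ mk_le_mk_of_subset hHH₁).antisymm (not_lt.1 fun hH ↦ ?_), hfree⟩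
  obtain ⟨y, hyH₁, hyH, hyB⟩ := exists_mem_forall_lt_notMem hκ hH₁ hB (hHH₁.trans hH₁κ) hH
  have := hmax.eq_of_subset ⟨insert_subset hyH₁ hHH₁, hfree.insert_of_forall_lt hyH hyB⟩
    (subset_insert y H)
  exact (hyH y (this ▸ mem_insert y H)).false

end FreeSubset

theorem Set.infinite_of_mk_eq_lift {κ : Cardinal.{0}} (hκ : ℵ₀ ≤ κ) {X : Set Ordinal.{0}}
    (hX : #X = Cardinal.lift.{1} κ) : X.Infinite :=
  infinite_coe_iff.1 (Cardinal.infinite_iff.2 (by simpa [hX] using hκ))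

section Patterns

variable {κ : Cardinal.{0}} {n : ℕ}

theorem exists_subset_forall_matches (hκ : κ.IsRegular) {H₁ : Set Ordinal.{0}}
    (hH₁κ : H₁ ⊆ Iio κ.ord) (hH₁ : #H₁ = Cardinal.lift.{1} κ)
    {Q : Set (Set Ordinal.{0} × Set Ordinal.{0})}
    (hQ : ∀ p ∈ Q, p.2 ∈ smallSets κ κ ∧ Disjoint p.1 p.2)
    (hcover : ∀ A ∈ nSets κ n, A ⊆ H₁ → ∃ B, (A, B) ∈ Q) :
    ∃ H ⊆ H₁, #H = Cardinal.lift.{1} κ ∧ ∀ X ∈ subBig κ H, ∃ p ∈ Q, Matches X p.1 p.2 := by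
  classical
  let B : Finset Ordinal.{0} → Set Ordinal.{0} := fun A ↦
    if h : ∃ B, ((A : Set Ordinal.{0}), B) ∈ Q then h.choose else ∅
  have hBQ : ∀ A : Finset Ordinal.{0}, ↑A ∈ nSets κ n → ↑A ⊆ H₁ → (↑A, B A) ∈ Q := by
    intro A hA hAH₁
    have hex := hcover A hA hAH₁
    simpa only [B, dif_pos hex] using hex.choose_spec
  have hB : ∀ A, #(B A) < Cardinal.lift.{1} κ := by
    intro A
    by_cases hex : ∃ B, ((A : Set Ordinal.{0}), B) ∈ Q
    · simpa only [B, dif_pos hex] using (hQ _ hex.choose_spec).1.2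
    · simpa [B, hex] using hκ.pos
  obtain ⟨H, hHH₁, hH, hfree⟩ := exists_isFreeSet_subset hκ hH₁κ hH₁ hB
  refine ⟨H, hHH₁, hH, fun X hX ↦ ?_⟩
  obtain ⟨A, hAX, hAcard, hinit⟩ := (infinite_of_mk_eq_lift hκ.aleph0_le hX.2).exists_initial_finset n
  have hAH₁ : ↑A ⊆ H₁ := hAX.trans (hX.1.trans hHH₁)
  have hAQ := hBQ A ⟨hAH₁.trans hH₁κ, by simp [hAcard]⟩ hAH₁
  exact ⟨_, hAQ, hfree.matches hX.1 hAX hinit (hQ _ hAQ).2⟩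

theorem PartitionProperty.exists_forall_not_matches_or_forall_matches
    (h : PartitionProperty κ) (hκ : ℵ₀ < κ) {ι : Type 1} (hι : #ι < Cardinal.lift.{1} κ)
    (P : ι → Set (Set Ordinal.{0} × Set Ordinal.{0}))
    (hP : ∀ i, ∀ p ∈ P i, p.1 ∈ nSets κ n ∧ p.2 ∈ smallSets κ κ ∧ Disjoint p.1 p.2) :
    ∃ H ∈ bigSets κ, (∀ X ∈ subBig κ H, ∀ i, ∀ p ∈ P i, ¬ Matches X p.1 p.2) ∨
      ∃ i, ∀ X ∈ subBig κ H, ∃ p ∈ P i, Matches X p.1 p.2 := by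
  classical
  let d : Set Ordinal.{0} → Option ι := fun A ↦
    if h : ∃ i B, (A, B) ∈ P i then some h.choose else none
  have hd : #(Option ι) < Cardinal.lift.{1} κ := by
    rw [mk_option]
    exact add_lt_of_lt (aleph0_le_lift.2 hκ.le) hι (one_lt_aleph0.trans (by simpa using hκ))
  obtain ⟨H₁, hH₁κ, hH₁, hom⟩ := h.exists_homogeneous n hd d
  obtain ⟨A₀, hA₀H₁, hA₀, -⟩ := (infinite_of_mk_eq_lift hκ.le hH₁).exists_initial_finset n
  have hA₀n : ↑A₀ ∈ nSets κ n := ⟨hA₀H₁.trans hH₁κ, by simp [hA₀]⟩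
  cases hdA₀ : d A₀ with
  | none =>
    refine ⟨H₁, ⟨hH₁κ, hH₁⟩, Or.inl fun X hX i p hp hXp ↦ ?_⟩
    have hdp : d p.1 = none := (hom _ (hP i p hp).1 _ hA₀n (hXp.1.trans hX.1) hA₀H₁).trans hdA₀
    simp only [d, dite_eq_right_iff, reduceCtorEq, imp_false] at hdp
    exact hdp ⟨i, p.2, hp⟩
  | some i =>
    have hcover : ∀ A ∈ nSets κ n, A ⊆ H₁ → ∃ B, (A, B) ∈ P i := by
      intro A hA hAH₁
      have hdA : d A = some i := (hom A hA _ hA₀n hAH₁ hA₀H₁).trans hdA₀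
      simp only [d] at hdA
      split_ifs at hdA with hex
      exact Option.some_inj.1 hdA ▸ hex.choose_spec
    obtain ⟨H, hHH₁, hH, hmatch⟩ := exists_subset_forall_matches (h.isRegular hκ) hH₁κ hH₁
      (fun p hp ↦ (hP i p hp).2) hcover
    exact ⟨H, ⟨hHH₁.trans hH₁κ, hH⟩, Or.inr ⟨i, hmatch⟩⟩

end Patterns

theorem statement8_general (κ : Cardinal.{0}) (hκ : ℵ₀ < κ)
    (hpart : ∀ (n : ℕ) (μ : Cardinal.{0}), μ < κ →
      ∀ d : Set Ordinal.{0} → Ordinal.{0},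
        (∀ A ∈ nSets κ n, d A < μ.ord) →
        ∃ H, H ⊆ Set.Iio κ.ord ∧ #H = Cardinal.lift.{1} κ ∧
          ∀ A₁ ∈ nSets κ n, ∀ A₂ ∈ nSets κ n, A₁ ⊆ H → A₂ ⊆ H → d A₁ = d A₂)
    (lam : Cardinal.{0}) (hlamκ : lam < κ) (n : ℕ)
    (c : Set Ordinal.{0} → Ordinal.{0})
    (hc : ∀ X ∈ bigSets κ, c X ≤ lam.ord)
    (hpre : ∀ α < lam.ord,
      {X ∈ bigSets κ | c X = α} ∈ SigmaFam κ (nSets κ n) (smallSets κ κ)) :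
    ∃ H ∈ bigSets κ, ∀ X ∈ subBig κ H, ∀ Y ∈ subBig κ H, c X = c Y := by
  choose Q hQ using hpre
  have hcolour : ∀ α (hα : α < lam.ord), ∀ X ∈ bigSets κ,
      c X = α ↔ ∃ p ∈ Q α hα, Matches X p.1 p.2 := fun α hα X hX ↦ by
    simpa [hX] using Set.ext_iff.1 (hQ α hα).2 X
  obtain ⟨H, hH, hcase⟩ := PartitionProperty.exists_forall_not_matches_or_forall_matches hpart hκ
    (ι := Iio lam.ord) (by rwa [mk_Iio_ordinal, card_ord, Cardinal.lift_lt])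
    (fun α ↦ Q α.1 α.2) fun α ↦ (hQ α.1 α.2).1
  have hbig : ∀ X ∈ subBig κ H, X ∈ bigSets κ := fun X hX ↦ ⟨hX.1.trans hH.1, hX.2⟩
  suffices ∃ β, ∀ X ∈ subBig κ H, c X = β by
    obtain ⟨β, hβ⟩ := this
    exact ⟨H, hH, fun X hX Y hY ↦ (hβ X hX).trans (hβ Y hY).symm⟩
  rcases hcase with hnone | ⟨⟨α, hα⟩, hall⟩
  · refine ⟨lam.ord, fun X hX ↦ (hc X (hbig X hX)).eq_of_not_lt fun hlt ↦ ?_⟩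
    obtain ⟨p, hp, hXp⟩ := (hcolour _ hlt X (hbig X hX)).1 rfl
    exact hnone X hX ⟨_, hlt⟩ p hp hXp
  · exact ⟨α, fun X hX ↦ (hcolour α hα X (hbig X hX)).2 (hall X hX)⟩

/-- Let `κ` be an uncountable cardinal such that every coloring
of `[κ]^n` with `μ < κ` colors has a homogeneous set of cardinality `κ`
(`n ∈ ω`, `μ` arbitrary).  Let `1 ≤ λ < κ` and let `c : [κ]^κ → λ+1` be such
that `c⁻¹(α) ∈ Σ([κ]^n, [κ]^{<κ})` for each `α < λ` (nothing is assumed about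
`c⁻¹(λ)`).  Then `c` is Ramsey. -/
theorem statement8 (κ : Cardinal.{0}) (hκ : ℵ₀ < κ)
    (hpart : ∀ (n : ℕ) (μ : Cardinal.{0}), μ < κ →
      ∀ d : Set Ordinal.{0} → Ordinal.{0},
        (∀ A ∈ nSets κ n, d A < μ.ord) →
        ∃ H, H ⊆ Set.Iio κ.ord ∧ #H = Cardinal.lift.{1} κ ∧
          ∀ A₁ ∈ nSets κ n, ∀ A₂ ∈ nSets κ n, A₁ ⊆ H → A₂ ⊆ H → d A₁ = d A₂)
    (lam : Cardinal.{0}) (hlam1 : 1 ≤ lam) (hlamκ : lam < κ) (n : ℕ)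
    (c : Set Ordinal.{0} → Ordinal.{0})
    (hc : ∀ X ∈ bigSets κ, c X ≤ lam.ord)
    (hpre : ∀ α < lam.ord,
      {X ∈ bigSets κ | c X = α} ∈ SigmaFam κ (nSets κ n) (smallSets κ κ)) :
    ∃ H ∈ bigSets κ, ∀ X ∈ subBig κ H, ∀ Y ∈ subBig κ H, c X = c Y :=
  statement8_general κ hκ hpart lam hlamκ n c hc hpre
end

section
/- Let κ be an infinite cardinal that is not a Ramsey cardinal, in the sense that there exists a coloring c : [κ]^{<ω} → 2 such that there is no H ∈ [κ]^κ with c constant on [H]^n for every n ∈ ω. Then there are sets 𝒮_n ∈ Δ([κ]^n, [κ]^{<κ}) for n < ω such that no single H ∈ [κ]^κ is homogeneous for all of the 𝒮_n. -/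
/-!
Let `𝒮ₙ` consist of the `X ∈ [κ]^κ` whose `n` least elements get colour `0`. Membership of `X`
in `𝒮ₙ` is decided by the pattern `(A, gaps A)`, where `A` is the set of the `n` least elements
of `X` and `gaps A`, the ordinals below `max A` missing from `A`, has size `< κ`; the complement
of `𝒮ₙ` has the same form with colour `1`, so `𝒮ₙ ∈ Δ([κ]^n, [κ]^{<κ})`. Every `A ∈ [H]^n` is
the set of the `n` least elements of some `X ∈ [H]^κ` (add the elements of `H` above `A`), so an
`H` homogeneous for all `𝒮ₙ` makes `c` constant on every `[H]^n`.
-/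

open Set Cardinal

universe u

section InitialSegment

variable {α : Type*} [LinearOrder α]

def IsInitialSegment (X A : Set α) : Prop :=
  A ⊆ X ∧ X ∩ lowerClosure A ⊆ A

def gaps (A : Set α) : Set α :=
  (lowerClosure A : Set α) \ A

theorem disjoint_gaps_iff {X A : Set α} : Disjoint (gaps A) X ↔ X ∩ lowerClosure A ⊆ A := by
  simp only [gaps, Set.disjoint_left, Set.mem_sdiff, SetLike.mem_coe, Set.subset_def,
    Set.mem_inter_iff]
  exact ⟨fun h x ⟨hX, hA⟩ => by_contra fun hxA => h ⟨hA, hxA⟩ hX,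
    fun h x ⟨hA, hxA⟩ hX => hxA (h x ⟨hX, hA⟩)⟩

theorem IsInitialSegment.subset_or_subset {X A B : Set α} (hA : IsInitialSegment X A)
    (hB : IsInitialSegment X B) : A ⊆ B ∨ B ⊆ A := by
  by_contra! h
  obtain ⟨⟨a, ha, haB⟩, ⟨b, hb, hbA⟩⟩ := And.intro (Set.not_subset.mp h.1) (Set.not_subset.mp h.2)
  rcases le_total a b with hab | hba
  · exact haB (hB.2 ⟨hA.1 ha, mem_lowerClosure.mpr ⟨b, hb, hab⟩⟩)
  · exact hbA (hA.2 ⟨hB.1 hb, mem_lowerClosure.mpr ⟨a, ha, hba⟩⟩)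

theorem IsInitialSegment.eq_of_encard_eq {X A B : Set α} (hA : IsInitialSegment X A)
    (hB : IsInitialSegment X B) (hfin : A.Finite) (hcard : A.encard = B.encard) : A = B := by
  rcases hA.subset_or_subset hB with hAB | hBA
  · exact hfin.eq_of_subset_of_encard_le hAB hcard.ge
  · have hBfin : B.Finite := Set.encard_lt_top_iff.mp (hcard ▸ hfin.encard_lt_top)
    exact (hBfin.eq_of_subset_of_encard_le hBA hcard.le).symm

theorem exists_isInitialSegment_mk_eq [WellFoundedLT α] {X : Set α} (hX : X.Infinite) (n : ℕ) :
    ∃ A, IsInitialSegment X A ∧ #A = n := by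
  induction n with
  | zero => exact ⟨∅, ⟨Set.empty_subset X, by simp⟩, by simp⟩
  | succ n ih =>
    obtain ⟨A, hA, hAn⟩ := ih
    have hfin : A.Finite := Cardinal.lt_aleph0_iff_set_finite.mp (hAn ▸ natCast_lt_aleph0)
    have hne : (X \ A).Nonempty := (hX.sdiff hfin).nonempty
    set m := wellFounded_lt.min (X \ A) hne
    have hm : m ∈ X \ A := wellFounded_lt.min_mem (X \ A) hne
    refine ⟨insert m A, ⟨Set.insert_subset hm.1 hA.1, ?_⟩, ?_⟩
    · rintro x ⟨hxX, hx⟩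
      obtain ⟨a, rfl | ha, hxa⟩ := mem_lowerClosure.mp hx
      · by_cases hxA : x ∈ A
        · exact Set.mem_insert_of_mem m hxA
        · have hmx : ¬ x < m := wellFounded_lt.not_lt_min (X \ A) (show x ∈ X \ A from ⟨hxX, hxA⟩)
          exact Or.inl (hxa.antisymm (not_lt.mp hmx))
      · exact Set.mem_insert_of_mem m (hA.2 ⟨hxX, mem_lowerClosure.mpr ⟨a, ha, hxa⟩⟩)
    · rw [Cardinal.mk_insert hm.2, hAn, Nat.cast_succ]

end InitialSegment

theorem Cardinal.mk_sdiff_eq_of_mk_lt_s9 {α : Type*} {H B : Set α} (hH : ℵ₀ ≤ #H) (hB : #B < #H) :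
    #(H \ B : Set α) = #H := by
  refine (mk_le_mk_of_subset Set.sdiff_subset).antisymm (not_lt.mp fun hlt => ?_)
  exact (le_mk_sdiff_add_mk H B).not_gt (add_lt_of_lt hH hlt hB)

theorem mk_lowerClosure_lt {κ : Cardinal.{0}} (hκ : ℵ₀ ≤ κ) {A : Set Ordinal.{0}}
    (hfin : A.Finite) (hA : A ⊆ Set.Iio κ.ord) : #(lowerClosure A) < Cardinal.lift.{1} κ := by
  rcases A.eq_empty_or_nonempty with rfl | hne
  · simpa using (aleph0_pos.trans_le hκ)
  · have hsucc : Order.succ (sSup A) < κ.ord :=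
      (isSuccLimit_ord hκ).succ_lt (hA (hne.csSup_mem hfin))
    have hsub : (lowerClosure A : Set Ordinal.{0}) ⊆ Set.Iio (Order.succ (sSup A)) := by
      intro x hx
      obtain ⟨a, ha, hxa⟩ := mem_lowerClosure.mp hx
      exact Order.lt_succ_iff.mpr (hxa.trans (le_csSup hfin.bddAbove ha))
    calc #(lowerClosure A) ≤ #(Set.Iio (Order.succ (sSup A))) := mk_le_mk_of_subset hsub
      _ < Cardinal.lift.{1} κ := by rwa [mk_Iio_ordinal, lift_lt, ← lt_ord]

theorem matches_gaps_iff {X A : Set Ordinal.{0}} :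
    Matches X A (gaps A) ↔ IsInitialSegment X A := by
  rw [Matches, ← Set.disjoint_iff_inter_eq_empty, disjoint_gaps_iff, IsInitialSegment]

theorem exists_mem_subBig_isInitialSegment {κ : Cardinal.{0}} (hκ : ℵ₀ ≤ κ)
    {H A : Set Ordinal.{0}} {n : ℕ} (hH : H ∈ bigSets κ) (hA : A ∈ nSets κ n) (hAH : A ⊆ H) :
    ∃ X ∈ subBig κ H, IsInitialSegment X A := by
  have hfin : A.Finite := Cardinal.lt_aleph0_iff_set_finite.mp (hA.2 ▸ natCast_lt_aleph0)
  set T := H \ (lowerClosure A : Set Ordinal.{0})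
  have hT : #T = Cardinal.lift.{1} κ := by
    rw [← hH.2]
    exact mk_sdiff_eq_of_mk_lt_s9 (hH.2 ▸ aleph0_le_lift.mpr hκ)
      (hH.2 ▸ mk_lowerClosure_lt hκ hfin hA.1)
  refine ⟨A ∪ T, ⟨Set.union_subset hAH Set.sdiff_subset, ?_⟩, Set.subset_union_left, ?_⟩
  · exact le_antisymm (hH.2 ▸ mk_le_mk_of_subset (Set.union_subset hAH Set.sdiff_subset))
      (hT ▸ mk_le_mk_of_subset Set.subset_union_right)
  · rintro x ⟨hxA | ⟨-, hxT⟩, hx⟩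
    exacts [hxA, absurd hx hxT]

section PrefixSets

variable (κ : Cardinal.{0}) (n : ℕ) (P : Set Ordinal.{0} → Prop)

def prefixPatterns : Set (Set Ordinal.{0} × Set Ordinal.{0}) :=
  (fun A => (A, gaps A)) '' {A | A ∈ nSets κ n ∧ P A}

/-- The `X ∈ [κ]^κ` whose `n` least elements form a set satisfying `P`. -/
def prefixSet : Set (Set Ordinal.{0}) :=
  {X ∈ bigSets κ | ∃ p ∈ prefixPatterns κ n P, Matches X p.1 p.2}

variable {κ n P}

theorem mem_prefixSet_iff {X A : Set Ordinal.{0}} (hX : X ∈ bigSets κ)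
    (hA : IsInitialSegment X A) (hAn : #A = n) : X ∈ prefixSet κ n P ↔ P A := by
  constructor
  · rintro ⟨-, -, ⟨B, ⟨hBn, hPB⟩, rfl⟩, hXB⟩
    have hAB : A = B := hA.eq_of_encard_eq (matches_gaps_iff.mp hXB)
      (Cardinal.lt_aleph0_iff_set_finite.mp (hAn ▸ natCast_lt_aleph0))
      (by rw [← toENat_cardinalMk, ← toENat_cardinalMk, hAn, hBn.2])
    rwa [hAB]
  · intro hPA
    exact ⟨hX, _, ⟨A, ⟨⟨hA.1.trans hX.1, hAn⟩, hPA⟩, rfl⟩, matches_gaps_iff.mpr hA⟩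

variable (n P)

theorem prefixSet_mem_sigmaFam (hκ : ℵ₀ ≤ κ) :
    prefixSet κ n P ∈ SigmaFam κ (nSets κ n) (smallSets κ κ) := by
  refine ⟨prefixPatterns κ n P, ?_, rfl⟩
  rintro - ⟨A, ⟨hAn, -⟩, rfl⟩
  have hfin : A.Finite := Cardinal.lt_aleph0_iff_set_finite.mp (hAn.2 ▸ natCast_lt_aleph0)
  refine ⟨hAn, ⟨fun x hx => ?_, ?_⟩, Set.disjoint_sdiff_right⟩
  · obtain ⟨a, ha, hxa⟩ := mem_lowerClosure.mp hx.1
    exact hxa.trans_lt (hAn.1 ha)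
  · exact (mk_le_mk_of_subset Set.sdiff_subset).trans_lt (mk_lowerClosure_lt hκ hfin hAn.1)

theorem bigSets_sdiff_prefixSet (hκ : ℵ₀ ≤ κ) :
    bigSets κ \ prefixSet κ n P = prefixSet κ n (fun A => ¬ P A) := by
  ext X
  by_cases hX : X ∈ bigSets κ
  · have hXinf : X.Infinite := by
      rw [← Set.infinite_coe_iff, Cardinal.infinite_iff, hX.2]
      exact aleph0_le_lift.mpr hκ
    obtain ⟨A, hA, hAn⟩ := exists_isInitialSegment_mk_eq hXinf n
    rw [Set.mem_sdiff, mem_prefixSet_iff hX hA hAn, mem_prefixSet_iff hX hA hAn]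
    exact and_iff_right hX
  · exact iff_of_false (fun h => hX h.1) (fun h => hX h.1)

theorem prefixSet_mem_deltaFam (hκ : ℵ₀ ≤ κ) :
    prefixSet κ n P ∈ DeltaFam κ (nSets κ n) (smallSets κ κ) :=
  ⟨prefixSet_mem_sigmaFam n P hκ,
    bigSets_sdiff_prefixSet n P hκ ▸ prefixSet_mem_sigmaFam n _ hκ⟩

variable {n P}

theorem iff_of_homogeneous_prefixSet (hκ : ℵ₀ ≤ κ) {H : Set Ordinal.{0}} (hH : H ∈ bigSets κ)
    (hhom : subBig κ H ⊆ prefixSet κ n P ∨ subBig κ H ∩ prefixSet κ n P = ∅)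
    {A₁ A₂ : Set Ordinal.{0}} (hA₁ : A₁ ∈ nSets κ n) (hA₂ : A₂ ∈ nSets κ n)
    (hA₁H : A₁ ⊆ H) (hA₂H : A₂ ⊆ H) : P A₁ ↔ P A₂ := by
  have key : ∀ A ∈ nSets κ n, A ⊆ H → (P A ↔ subBig κ H ⊆ prefixSet κ n P) := by
    intro A hA hAH
    obtain ⟨X, hXH, hXA⟩ := exists_mem_subBig_isInitialSegment hκ hH hA hAH
    rw [← mem_prefixSet_iff (P := P) (⟨hXH.1.trans hH.1, hXH.2⟩ : X ∈ bigSets κ) hXA hA.2]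
    refine ⟨fun hX => hhom.resolve_right fun h => ?_, fun h => h hXH⟩
    exact h.subset ⟨hXH, hX⟩
  exact (key A₁ hA₁ hA₁H).trans (key A₂ hA₂ hA₂H).symm

end PrefixSets

/-- If the infinite cardinal `κ` is not Ramsey, in the sense
that some coloring `c : [κ]^{<ω} → 2` admits no `H ∈ [κ]^κ` with `c` constant
on `[H]^n` for every `n`, then there are sets `𝒮ₙ ∈ Δ([κ]^n, [κ]^{<κ})`
(`n < ω`) such that no single `H ∈ [κ]^κ` is homogeneous for all of them. -/
theorem statement9 (κ : Cardinal.{0}) (hκ : ℵ₀ ≤ κ)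
    (hnr : ∃ c : Set Ordinal.{0} → Fin 2,
      ¬ ∃ H ∈ bigSets κ, ∀ n : ℕ,
        ∀ A₁ ∈ nSets κ n, ∀ A₂ ∈ nSets κ n, A₁ ⊆ H → A₂ ⊆ H → c A₁ = c A₂) :
    ∃ S : ℕ → Set (Set Ordinal.{0}),
      (∀ n, S n ∈ DeltaFam κ (nSets κ n) (smallSets κ κ)) ∧
      ¬ ∃ H ∈ bigSets κ, ∀ n,
        subBig κ H ⊆ S n ∨ subBig κ H ∩ S n = ∅ := by
  obtain ⟨c, hc⟩ := hnr
  refine ⟨fun n => prefixSet κ n (c · = 0), fun n => prefixSet_mem_deltaFam n _ hκ, ?_⟩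
  rintro ⟨H, hH, hhom⟩
  refine hc ⟨H, hH, fun n A₁ hA₁ A₂ hA₂ hA₁H hA₂H => ?_⟩
  have h := iff_of_homogeneous_prefixSet hκ hH (hhom n) hA₁ hA₂ hA₁H hA₂H
  omega
end
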